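/- arXiv:1909.13871 — 3 statements merged into one kernel-verified Lean document; each statement's English description precedes it below -/
import Mathlib

section
/- For all integers n ≥ 1 and i ≥ 2, the F2-dimension of the space Gov(V_[n], i) spanned by the governing tensors equals (i−1)·binom(n, i). -/
abbrev F2 := ZMod 2

namespace HigherGenus

abbrev V (ι : Type) := ι → F2

abbrev ML (ι : Type) (i : ℕ) := MultilinearMap F2 (fun _ : Fin i => V ι) F2

variable {ι : Type} [Fintype ι] [DecidableEq ι]

/-- The tensor product of a family of linear functionals, as a multilinear map. -/
noncomputable def funcTensor {i : ℕ} (L : Fin i → (V ι →ₗ[F2] F2)) : ML ι i :=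
  (MultilinearMap.mkPiAlgebra F2 (Fin i) F2).compLinearMap L

/-- `χ_{h 1} ⊗ ⋯ ⊗ χ_{h i}` as a multilinear map. -/
noncomputable def chiTensor (i : ℕ) (h : Fin i → ι) : ML ι i :=
  funcTensor (fun p => LinearMap.proj (h p))

/-- The governing tensor `φ_{(A,x)}`: the sum of `χ_{τ(1)}⊗⋯⊗χ_{τ(i)}` over all bijections
`τ : [i] ≃ A` placing `x` in one of the last two positions. -/
noncomputable def govTensor (i : ℕ) (A : Finset ι) (x : ι) : ML ι i :=
  ∑ τ : Fin i ≃ {a // a ∈ A},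
    if ∀ p : Fin i, ((τ p : ι) = x → i ≤ (p : ℕ) + 2) then
      chiTensor i (fun p => (τ p : ι)) else 0

/-- `Gov(V_B, i)`: the span of the governing tensors supported in `B`. -/
noncomputable def Gov (i : ℕ) (B : Finset ι) : Submodule F2 (ML ι i) :=
  Submodule.span F2
    {φ | ∃ A : Finset ι, ∃ x : ι, A ⊆ B ∧ A.card = i ∧ x ∈ A ∧ φ = govTensor i A x}

/-- `Multi~(V_B, i)`: the span of the injective pure tensors supported in `B`. -/
noncomputable def MultiT (i : ℕ) (B : Finset ι) : Submodule F2 (ML ι i) :=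
  Submodule.span F2
    {φ | ∃ τ : Fin i → ι, Function.Injective τ ∧ (∀ p, τ p ∈ B) ∧ φ = chiTensor i τ}

/-- Evaluation of a multilinear map at a fixed tuple, as a linear map. -/
def mEval {i : ℕ} (σ : Fin i → V ι) : ML ι i →ₗ[F2] F2 where
  toFun b := b σ
  map_add' _ _ := rfl
  map_smul' _ _ := rfl

/-- Plugging the vector `v` into the first slot of a multilinear map. -/
noncomputable def consMapL {i : ℕ} (v : V ι) : ML ι (i + 1) →ₗ[F2] ML ι i :=
  (LinearMap.applyₗ v).comp
    (multilinearCurryLeftEquiv F2 (fun _ : Fin (i + 1) => V ι) F2).toLinearMap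

/-- The standard basis vector `e_j`. -/
def stdb (j : ι) : V ι := Pi.single j 1

/-- The recursively defined subspaces `Cons(V_B, i)`. -/
noncomputable def Cons : (i : ℕ) → Finset ι → Submodule F2 (ML ι i)
  | 0, _ => ⊥
  | 1, B => Gov 1 B
  | 2, B => MultiT 2 B ⊓
      (⨅ σ : Fin 2 → V ι, LinearMap.ker (mEval σ - mEval (σ ∘ (Equiv.swap 0 1))))
  | 3, B => (MultiT 3 B ⊓
      (⨅ j ∈ B, Submodule.comap (consMapL (stdb j)) (Cons 2 (B.erase j)))) ⊓
      (⨅ j₁ : ι, ⨅ j₂ : ι, ⨅ j₃ : ι,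
        LinearMap.ker (mEval ![stdb j₁, stdb j₂, stdb j₃]
          + mEval ![stdb j₃, stdb j₁, stdb j₂] + mEval ![stdb j₂, stdb j₃, stdb j₁]))
  | (i+4), B => (MultiT (i+4) B ⊓
      (⨅ j ∈ B, Submodule.comap (consMapL (stdb j)) (Cons (i+3) (B.erase j)))) ⊓
      (⨅ j₁ : ι, ⨅ j₂ : ι, ⨅ _ : j₁ ≠ j₂,
        LinearMap.ker ((consMapL (stdb j₂)).comp (consMapL (stdb j₁))
          - (consMapL (stdb j₁)).comp (consMapL (stdb j₂))))

/-!
For `A` of size `i` and a bijection `τ : [i] → A`, the pure tensor `χ_τ` occurs in `φ_{(A,x)}`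
exactly for the two values `x = τ(i-1)` and `x = τ(i)`, so `∑_{x ∈ A} φ_{(A,x)} = 0` over `F₂`.
Hence `Gov(V_B, i)` is spanned by the `φ_{(A,x)}` with `x ≠ max A`, which are `(i-1)·C(#B, i)` many.
They are linearly independent: if `τ(i-1) = x` and `τ(i) = max A`, evaluation at
`(e_{τ 1}, …, e_{τ i})` is `1` on `φ_{(A,x)}` and `0` on every other member of the family.
-/

lemma Fin.le_add_two_iff {k : ℕ} (p : Fin (k + 2)) :
    k + 2 ≤ (p : ℕ) + 2 ↔ p = (Fin.last k).castSucc ∨ p = Fin.last (k + 1) := by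
  simp only [Fin.ext_iff, Fin.val_castSucc, Fin.val_last]
  omega

section GoverningTensors

variable {α : Type}

lemma chiTensor_apply {i : ℕ} (h : Fin i → α) (σ : Fin i → V α) :
    chiTensor i h σ = ∏ p, σ p (h p) := by
  simp [chiTensor, funcTensor]

lemma range_coe_comp_equiv {i : ℕ} {A : Finset α} (τ : Fin i ≃ {a // a ∈ A}) :
    Set.range (fun p => (τ p : α)) = A := by
  rw [Set.range_comp' Subtype.val τ, τ.range_eq_univ, Set.image_univ, Subtype.range_coe_subtype]
  rfl

variable [DecidableEq α]

lemma chiTensor_apply_stdb {i : ℕ} (h g : Fin i → α) :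
    chiTensor i h (fun p => stdb (g p)) = if h = g then 1 else 0 := by
  rw [chiTensor_apply]
  split_ifs with hg
  · simp [hg, stdb]
  · obtain ⟨p, hp⟩ := Function.ne_iff.mp hg
    exact Finset.prod_eq_zero (Finset.mem_univ p) (by simp [stdb, hp])

lemma govTensor_eq_sum {k : ℕ} {A : Finset α} {x : α} (hx : x ∈ A) :
    govTensor (k + 2) A x = ∑ τ : Fin (k + 2) ≃ {a // a ∈ A},
      if x = τ (Fin.last k).castSucc ∨ x = τ (Fin.last (k + 1)) then
        chiTensor (k + 2) (fun p => (τ p : α)) else 0 := by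
  refine Finset.sum_congr rfl fun τ _ => if_congr ?_ rfl rfl
  have hτ : ∀ p, (τ p : α) = x ↔ p = τ.symm ⟨x, hx⟩ := fun p => by
    rw [Equiv.eq_symm_apply, Subtype.ext_iff]
  simp only [hτ, forall_eq, Fin.le_add_two_iff, Equiv.symm_apply_eq, Subtype.ext_iff]

lemma sum_ite_eq_or_eq {M : Type*} [AddCommMonoid M] {s : Finset α} {a b : α} (ha : a ∈ s)
    (hb : b ∈ s) (hab : a ≠ b) (c : M) :
    ∑ x ∈ s, (if x = a ∨ x = b then c else 0) = c + c := by
  rw [← Finset.sum_filter, Finset.filter_or, Finset.filter_eq', Finset.filter_eq', if_pos ha,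
    if_pos hb, Finset.sum_union (Finset.disjoint_singleton.2 hab), Finset.sum_singleton,
    Finset.sum_singleton]

lemma sum_govTensor_eq_zero (k : ℕ) (A : Finset α) : ∑ x ∈ A, govTensor (k + 2) A x = 0 := by
  calc ∑ x ∈ A, govTensor (k + 2) A x
      = ∑ τ : Fin (k + 2) ≃ {a // a ∈ A}, ∑ x ∈ A,
          if x = τ (Fin.last k).castSucc ∨ x = τ (Fin.last (k + 1)) then
            chiTensor (k + 2) (fun p => (τ p : α)) else 0 := by
        rw [Finset.sum_comm]
        exact Finset.sum_congr rfl fun x hx => govTensor_eq_sum hx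
    _ = 0 := Finset.sum_eq_zero fun τ _ => by
        rw [sum_ite_eq_or_eq (τ _).2 (τ _).2
          (Subtype.val_injective.ne (τ.injective.ne (Fin.castSucc_lt_last _).ne)),
          ZModModule.add_self]

lemma govTensor_eq_sum_erase {k : ℕ} {A : Finset α} {x : α} (hx : x ∈ A) :
    govTensor (k + 2) A x = ∑ y ∈ A.erase x, govTensor (k + 2) A y := by
  have h := sum_govTensor_eq_zero k A
  rw [← Finset.add_sum_erase A _ hx, add_eq_zero_iff_eq_neg, ZModModule.neg_eq_self] at h
  exact h

lemma govTensor_apply_stdb {k : ℕ} {A A' : Finset α} (τ : Fin (k + 2) ≃ {a // a ∈ A}) {x : α}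
    (hx : x ∈ A') :
    govTensor (k + 2) A' x (fun p => stdb (τ p : α)) =
      if A' = A ∧ (x = τ (Fin.last k).castSucc ∨ x = τ (Fin.last (k + 1))) then 1 else 0 := by
  rw [govTensor_eq_sum hx, sum_apply]
  by_cases hA : A' = A
  · subst hA
    rw [Finset.sum_eq_single τ]
    · split_ifs <;> simp_all [chiTensor_apply_stdb]
    · intro τ' _ hne
      have : (fun p => (τ' p : α)) ≠ fun p => (τ p : α) := fun h =>
        hne (Equiv.ext fun p => Subtype.ext (congrFun h p))
      split_ifs <;> simp [chiTensor_apply_stdb, this]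
    · simp
  · rw [if_neg fun h => hA h.1]
    refine Finset.sum_eq_zero fun τ' _ => ?_
    have : (fun p => (τ' p : α)) ≠ fun p => (τ p : α) := fun h => hA <| by
      rw [← Finset.coe_inj, ← range_coe_comp_equiv τ', ← range_coe_comp_equiv τ, h]
    split_ifs <;> simp [chiTensor_apply_stdb, this]

end GoverningTensors

lemma Equiv.exists_apply_eq_and_apply_eq {β γ : Type*} [DecidableEq γ] (e : β ≃ γ) {a b : β}
    (hab : a ≠ b) {c d : γ} (hcd : c ≠ d) : ∃ τ : β ≃ γ, τ a = c ∧ τ b = d := by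
  set τ₁ := e.trans (Equiv.swap c (e a))
  have h₁ : τ₁ a = c := by simp [τ₁]
  have hb : τ₁ b ≠ c := fun h => hab (τ₁.injective (h.trans h₁.symm)).symm
  refine ⟨τ₁.trans (Equiv.swap d (τ₁ b)), ?_, by simp⟩
  rw [Equiv.trans_apply, h₁]
  exact Equiv.swap_apply_of_ne_of_ne hcd hb.symm

section Dimension

open Finset

variable {α : Type} [LinearOrder α]

lemma filter_exists_lt_eq_erase_max' {A : Finset α} (h : A.Nonempty) :
    {x ∈ A | ∃ y ∈ A, x < y} = A.erase (A.max' h) := by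
  ext x
  simp only [mem_filter, mem_erase]
  constructor
  · rintro ⟨hx, y, hy, hxy⟩
    exact ⟨(hxy.trans_le (A.le_max' y hy)).ne, hx⟩
  · rintro ⟨hne, hx⟩
    exact ⟨hx, A.max' h, A.max'_mem h, lt_of_le_of_ne (A.le_max' x hx) hne⟩

lemma exists_equiv_fin_apply_last_two {k : ℕ} {A : Finset α} (hA : #A = k + 2) {x y : α}
    (hx : x ∈ A) (hy : y ∈ A) (hxy : x ≠ y) :
    ∃ τ : Fin (k + 2) ≃ {a // a ∈ A},
      (τ (Fin.last k).castSucc : α) = x ∧ (τ (Fin.last (k + 1)) : α) = y := by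
  obtain ⟨τ, hτx, hτy⟩ := Equiv.exists_apply_eq_and_apply_eq (A.equivFinOfCardEq hA).symm
    (Fin.castSucc_lt_last (Fin.last k)).ne (c := (⟨x, hx⟩ : {a // a ∈ A})) (d := ⟨y, hy⟩)
    (by simpa using hxy)
  exact ⟨τ, by rw [hτx], by rw [hτy]⟩

def govIndex (k : ℕ) (B : Finset α) : Finset (Σ _ : Finset α, α) :=
  (B.powersetCard (k + 2)).sigma fun A => {x ∈ A | ∃ y ∈ A, x < y}

noncomputable def govFamily (k : ℕ) (B : Finset α) : govIndex k B → ML α (k + 2) :=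
  fun s => govTensor (k + 2) s.1.1 s.1.2

lemma mem_govIndex {k : ℕ} {B : Finset α} {s : Σ _ : Finset α, α} :
    s ∈ govIndex k B ↔ s.1 ⊆ B ∧ #s.1 = k + 2 ∧ s.2 ∈ s.1 ∧ ∃ y ∈ s.1, s.2 < y := by
  simp [govIndex, and_assoc]

lemma card_govIndex (k : ℕ) (B : Finset α) :
    #(govIndex k B) = (k + 1) * (#B).choose (k + 2) := by
  rw [govIndex, card_sigma, sum_const_nat (m := k + 1), card_powersetCard,
    mul_comm]
  intro A hA
  rw [mem_powersetCard] at hA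
  rw [filter_exists_lt_eq_erase_max' (card_pos.1 (by omega)),
    card_erase_of_mem (max'_mem _ _), hA.2]
  rfl

lemma Gov_eq_span_govFamily (k : ℕ) (B : Finset α) :
    Gov (k + 2) B = Submodule.span F2 (Set.range (govFamily k B)) := by
  apply le_antisymm
  · refine Submodule.span_le.2 ?_
    rintro _ ⟨A, x, hAB, hA, hx, rfl⟩
    have mem : ∀ y ∈ A, (∃ z ∈ A, y < z) →
        govTensor (k + 2) A y ∈ Submodule.span F2 (Set.range (govFamily k B)) :=
      fun y hy hyz => Submodule.subset_span ⟨⟨⟨A, y⟩, mem_govIndex.2 ⟨hAB, hA, hy, hyz⟩⟩, rfl⟩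
    by_cases hxz : ∃ z ∈ A, x < z
    · exact mem x hx hxz
    · simp only [not_exists, not_and, not_lt] at hxz
      rw [SetLike.mem_coe, govTensor_eq_sum_erase hx]
      refine Submodule.sum_mem _ fun y hy => mem y (mem_of_mem_erase hy) ⟨x, hx, ?_⟩
      exact lt_of_le_of_ne (hxz y (mem_of_mem_erase hy)) (ne_of_mem_erase hy)
  · refine Submodule.span_le.2 ?_
    rintro _ ⟨⟨s, hs⟩, rfl⟩
    obtain ⟨hAB, hA, hx, -⟩ := mem_govIndex.1 hs
    exact Submodule.subset_span ⟨s.1, s.2, hAB, hA, hx, rfl⟩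

lemma linearIndependent_govFamily (k : ℕ) (B : Finset α) :
    LinearIndependent F2 (govFamily k B) := by
  have key : ∀ s : govIndex k B, ∃ τ : Fin (k + 2) ≃ {a // a ∈ s.1.1},
      (τ (Fin.last k).castSucc : α) = s.1.2 ∧ ∀ z ∈ s.1.1, z ≤ τ (Fin.last (k + 1)) := by
    rintro ⟨⟨A, x⟩, hs⟩
    obtain ⟨-, hA, hx, y, hy, hxy⟩ := mem_govIndex.1 hs
    obtain ⟨τ, hτx, hτm⟩ := exists_equiv_fin_apply_last_two hA hx (A.max'_mem ⟨x, hx⟩)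
      (hxy.trans_le (A.le_max' y hy)).ne
    exact ⟨τ, hτx, fun z hz => hτm ▸ A.le_max' z hz⟩
  choose τ hτx hτm using key
  refine .of_pairwise_dual_eq_zero_one _ (fun s => mEval fun p => stdb (τ s p : α)) ?_ ?_
  · rintro ⟨⟨A, x⟩, hs⟩ ⟨⟨A', x'⟩, ht⟩ hne
    obtain ⟨-, -, hx', y, hy, hxy⟩ := mem_govIndex.1 ht
    change govTensor (k + 2) A' x' (fun p => stdb (τ _ p : α)) = 0
    rw [govTensor_apply_stdb _ hx', if_neg]
    rintro ⟨rfl, h | h⟩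
    · obtain rfl : x' = x := h.trans (hτx _)
      exact hne rfl
    · exact (hxy.trans_le (hτm _ y hy)).ne h
  · rintro ⟨⟨A, x⟩, hs⟩
    change govTensor (k + 2) A x (fun p => stdb (τ _ p : α)) = 1
    rw [govTensor_apply_stdb _ (mem_govIndex.1 hs).2.2.1,
      if_pos ⟨rfl, .inl (hτx ⟨⟨A, x⟩, hs⟩).symm⟩]

theorem finrank_Gov (k : ℕ) (B : Finset α) :
    Module.finrank F2 (Gov (k + 2) B) = (k + 1) * (#B).choose (k + 2) := by
  rw [Gov_eq_span_govFamily, finrank_span_eq_card (linearIndependent_govFamily k B),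
    Fintype.card_coe, card_govIndex]

end Dimension

theorem statement0_general (n : ℕ) (i : ℕ) (hi : 2 ≤ i) :
    Module.finrank F2 (Gov (ι := Fin n) i Finset.univ) = (i - 1) * n.choose i := by
  obtain ⟨k, rfl⟩ := Nat.exists_eq_add_of_le' hi
  simpa using finrank_Gov k (Finset.univ : Finset (Fin n))

/-- Gauss-type dimension count for the space of governing tensors:
for `n ≥ 1` and `i ≥ 2`, `dim Gov(V_[n], i) = (i−1)·C(n,i)`. -/
theorem statement0 (n : ℕ) (hn : 1 ≤ n) (i : ℕ) (hi : 2 ≤ i) :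
    Module.finrank F2 (Gov (ι := Fin n) i Finset.univ) = (i - 1) * n.choose i :=
  statement0_general n i hi

end HigherGenus
end

section
/- For every (k_1,…,k_n) ∈ Z_{≥1}^n and every integer i ≥ 2, the F2-dimension of Gov~(V_{[k_1,…,k_n]}, i) equals (k_1+⋯+k_n)·binom(n−1, i−1) − binom(n, i). -/
namespace HigherGenus

variable {ι : Type} [Fintype ι] [DecidableEq ι]

/-- The index set `[N]` for `N = k_1 + ⋯ + k_n`, presented with its block structure:
the `i`-th block `f(i)` is `{⟨i, r⟩ : r ∈ Fin (k i)}`. -/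
abbrev BIdx (n : ℕ) (k : Fin n → ℕ) : Type := Σ j : Fin n, Fin (k j)

/-- The linear map `π : V_[N] → V_[n]` sending `e_r` to `e_i` for `r` in the `i`-th block. -/
noncomputable def blockProj {n : ℕ} (k : Fin n → ℕ) : V (BIdx n k) →ₗ[F2] V (Fin n) :=
  LinearMap.pi (fun j => ∑ r : Fin (k j), LinearMap.proj (⟨j, r⟩ : BIdx n k))

/-- The generalized governing tensor `φ~_{(A,T)}`, for `A ⊆ [n]`, `x ∈ A`, `T ⊆ f(x)`:
the sum over all bijections `τ : [i] ≃ A` placing `x` in one of the last two positions of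
the tensor product whose factor at a position `p` is the sum of the coordinate functionals
over the block `f(τ p)` (resp. over `T` at the position corresponding to `x`). -/
noncomputable def genGovTensor {n : ℕ} (k : Fin n → ℕ) (i : ℕ) (A : Finset (Fin n))
    (x : Fin n) (T : Finset (Fin (k x))) : ML (BIdx n k) i :=
  ∑ τ : Fin i ≃ {a // a ∈ A},
    if ∀ p : Fin i, ((τ p : Fin n) = x → i ≤ (p : ℕ) + 2) then
      funcTensor (fun p =>
        if _h : (τ p : Fin n) = x then
          ∑ r ∈ T, LinearMap.proj ((⟨x, r⟩ : BIdx n k))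
        else
          ∑ r : Fin (k (τ p : Fin n)), LinearMap.proj ((⟨(τ p : Fin n), r⟩ : BIdx n k)))
    else 0

/-- `Gov~(V_{[k_1,…,k_n]}, i)`: the span of all generalized governing tensors. -/
noncomputable def GovT {n : ℕ} (k : Fin n → ℕ) (i : ℕ) : Submodule F2 (ML (BIdx n k) i) :=
  Submodule.span F2
    {φ | ∃ A : Finset (Fin n), ∃ x : Fin n, ∃ T : Finset (Fin (k x)),
        A.card = i ∧ x ∈ A ∧ φ = genGovTensor k i A x T}

/-- `Cons~(V_{[k_1,…,k_n]}, i)`: the subspace of `Cons(V_[N], i)` cut out by the three extra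
vanishing conditions (1), (2), (3). -/
noncomputable def ConsT {n : ℕ} (k : Fin n → ℕ) (i : ℕ) : Submodule F2 (ML (BIdx n k) i) :=
  Cons i Finset.univ ⊓
    (⨅ σ ∈ {σ : Fin i → V (BIdx n k) |
        (∃ h : Fin i, (h : ℕ) + 2 < i ∧ blockProj k (σ h) = 0) ∨
        (∀ h : Fin i, i ≤ (h : ℕ) + 2 → blockProj k (σ h) = 0) ∨
        (∃ h₁ h₂ : Fin i, h₁ ≠ h₂ ∧ ∃ c : Fin n,
          blockProj k (σ h₁) = stdb c ∧ blockProj k (σ h₂) = stdb c)},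
      LinearMap.ker (mEval σ))

/-! ### Auxiliary development for the dimension count -/

section DimensionProof

open Finset

/-- Evaluation of a multilinear map on all tuples of standard basis vectors. -/
noncomputable def evalB (ι : Type) [Fintype ι] [DecidableEq ι] (i : ℕ) :
    ML ι i →ₗ[F2] ((Fin i → ι) → F2) where
  toFun φ := fun g => φ fun p => stdb (g p)
  map_add' φ ψ := rfl
  map_smul' c φ := rfl

lemma evalB_injective (ι : Type) [Fintype ι] [DecidableEq ι] (i : ℕ) :
    Function.Injective (evalB ι i) := by
  intro φ ψ h
  refine Module.Basis.ext_multilinear (fun _ => Pi.basisFun F2 ι) fun v => ?_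
  have h2 := congrFun h v
  simpa [evalB, stdb] using h2

variable {n : ℕ} (k : Fin n → ℕ) {i : ℕ}

def Base (i : ℕ) (A : Finset (Fin n)) (g : Fin i → BIdx n k) : Prop :=
  Function.Injective (fun p => (g p).1) ∧ ∀ p, (g p).1 ∈ A

def Good (i : ℕ) (A : Finset (Fin n)) (x : Fin n) (T : Finset (Fin (k x)))
    (g : Fin i → BIdx n k) : Prop :=
  Base k i A g ∧ ∀ p, (g p).1 = x → (i ≤ (p : ℕ) + 2 ∧ ∃ r ∈ T, g p = ⟨x, r⟩)

open Classical in
/-- The indicator function of `Good`. -/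
noncomputable def CInd (i : ℕ) (A : Finset (Fin n)) (x : Fin n) (T : Finset (Fin (k x))) :
    (Fin i → BIdx n k) → F2 :=
  fun g => if Good k i A x T g then 1 else 0

lemma base_tau {A : Finset (Fin n)} (hA : A.card = i) {g : Fin i → BIdx n k}
    (hb : Base k i A g) :
    ∃ τ : Fin i ≃ {a // a ∈ A}, ∀ p, ((τ p : Fin n)) = (g p).1 := by
  have hinj : Function.Injective (fun p : Fin i => (⟨(g p).1, hb.2 p⟩ : {a // a ∈ A})) := by
    intro p q hpq
    exact hb.1 (congrArg Subtype.val hpq)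
  have hcard : Fintype.card (Fin i) = Fintype.card {a // a ∈ A} := by
    simp [Fintype.card_coe, hA]
  exact ⟨Equiv.ofBijective _ ((Fintype.bijective_iff_injective_and_card _).mpr
    ⟨hinj, hcard⟩), fun p => rfl⟩

lemma sigma_fst_eq {b : Fin n} {q : BIdx n k} (h : q.1 = b) : ∃ r : Fin (k b), q = ⟨b, r⟩ := by
  obtain ⟨b', s⟩ := q
  cases h
  exact ⟨s, rfl⟩

lemma sum_proj_stdb (b : Fin n) (T : Finset (Fin (k b))) (q : BIdx n k) :
    (∑ r ∈ T, (LinearMap.proj (⟨b, r⟩ : BIdx n k) : V (BIdx n k) →ₗ[F2] F2)) (stdb q)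
      = if ∃ r ∈ T, q = (⟨b, r⟩ : BIdx n k) then 1 else 0 := by
  classical
  obtain ⟨b', s⟩ := q
  simp only [LinearMap.coe_sum, Finset.sum_apply, LinearMap.proj_apply, stdb,
    Pi.single_apply]
  by_cases hb : b' = b
  · subst hb
    simp [Sigma.ext_iff, eq_comm]
  · simp [Sigma.ext_iff, hb, Ne.symm hb]

open Classical in
lemma evalB_genGov {A : Finset (Fin n)} {x : Fin n} (T : Finset (Fin (k x)))
    (hA : A.card = i) (hx : x ∈ A) :
    evalB (BIdx n k) i (genGovTensor k i A x T) = CInd k i A x T := by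
  classical
  funext g
  have h1 : evalB (BIdx n k) i (genGovTensor k i A x T) g
      = ∑ τ : Fin i ≃ {a // a ∈ A},
          (if ((∀ p : Fin i, ((τ p : Fin n) = x → i ≤ (p : ℕ) + 2)) ∧
              ∀ p : Fin i, (if (τ p : Fin n) = x then ∃ r ∈ T, g p = ⟨x, r⟩
                else (g p).1 = (τ p : Fin n))) then (1 : F2) else 0) := by
    unfold genGovTensor
    rw [map_sum, Finset.sum_apply]
    refine Finset.sum_congr rfl fun τ _ => ?_
    by_cases hc : ∀ p : Fin i, ((τ p : Fin n) = x → i ≤ (p : ℕ) + 2)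
    · rw [if_pos hc]
      have hval : ∀ p : Fin i,
          (if _h : (τ p : Fin n) = x then
              (∑ r ∈ T, LinearMap.proj ((⟨x, r⟩ : BIdx n k)) : V (BIdx n k) →ₗ[F2] F2)
            else
              ∑ r : Fin (k (τ p : Fin n)),
                LinearMap.proj ((⟨(τ p : Fin n), r⟩ : BIdx n k))) (stdb (g p))
          = if (if (τ p : Fin n) = x then ∃ r ∈ T, g p = ⟨x, r⟩
              else (g p).1 = (τ p : Fin n)) then (1 : F2) else 0 := by
        intro p
        by_cases hp : (τ p : Fin n) = x
        · rw [dif_pos hp, sum_proj_stdb k x T (g p)]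
          refine if_congr ?_ rfl rfl
          rw [if_pos hp]
        · rw [dif_neg hp, sum_proj_stdb k _ Finset.univ (g p)]
          refine if_congr ?_ rfl rfl
          rw [if_neg hp]
          constructor
          · rintro ⟨r, -, hr⟩
            rw [hr]
          · intro h
            obtain ⟨r, hr⟩ := sigma_fst_eq k h
            exact ⟨r, Finset.mem_univ r, hr⟩
      have hET : evalB (BIdx n k) i (funcTensor fun p =>
          if _h : (τ p : Fin n) = x then
            (∑ r ∈ T, LinearMap.proj ((⟨x, r⟩ : BIdx n k)) : V (BIdx n k) →ₗ[F2] F2)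
          else
            ∑ r : Fin (k (τ p : Fin n)),
              LinearMap.proj ((⟨(τ p : Fin n), r⟩ : BIdx n k))) g
          = ∏ p : Fin i,
            (if _h : (τ p : Fin n) = x then
              (∑ r ∈ T, LinearMap.proj ((⟨x, r⟩ : BIdx n k)) : V (BIdx n k) →ₗ[F2] F2)
            else
              ∑ r : Fin (k (τ p : Fin n)),
                LinearMap.proj ((⟨(τ p : Fin n), r⟩ : BIdx n k))) (stdb (g p)) := by
        simp [evalB, funcTensor]
      rw [hET]
      simp only [hval]
      rw [Finset.prod_boole]
      by_cases hq : ∀ p : Fin i, (if (τ p : Fin n) = x then ∃ r ∈ T, g p = ⟨x, r⟩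
          else (g p).1 = (τ p : Fin n))
      · rw [if_pos fun p _ => hq p, if_pos ⟨hc, hq⟩]
      · rw [if_neg fun hall => hq fun p => hall p (Finset.mem_univ p),
          if_neg fun h => hq h.2]
    · rw [if_neg hc, map_zero, if_neg fun h => hc h.1]
      rfl
  rw [h1]
  have coe_of_P : ∀ τ : Fin i ≃ {a // a ∈ A},
      ((∀ p : Fin i, ((τ p : Fin n) = x → i ≤ (p : ℕ) + 2)) ∧
        ∀ p : Fin i, (if (τ p : Fin n) = x then ∃ r ∈ T, g p = ⟨x, r⟩
          else (g p).1 = (τ p : Fin n))) → ∀ p, ((τ p : Fin n)) = (g p).1 := by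
    intro τ hPτ p
    by_cases hp : (τ p : Fin n) = x
    · have := hPτ.2 p
      rw [if_pos hp] at this
      obtain ⟨r, -, hr⟩ := this
      rw [hp, hr]
    · have := hPτ.2 p
      rw [if_neg hp] at this
      exact this.symm
  have good_of_P : ∀ τ : Fin i ≃ {a // a ∈ A},
      ((∀ p : Fin i, ((τ p : Fin n) = x → i ≤ (p : ℕ) + 2)) ∧
        ∀ p : Fin i, (if (τ p : Fin n) = x then ∃ r ∈ T, g p = ⟨x, r⟩
          else (g p).1 = (τ p : Fin n))) → Good k i A x T g := by
    intro τ hPτ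
    have hcoe := coe_of_P τ hPτ
    have hbase : Base k i A g := by
      constructor
      · intro p q hpq
        apply τ.injective
        apply Subtype.ext
        rw [hcoe p, hcoe q]
        exact hpq
      · intro p
        rw [← hcoe p]
        exact (τ p).2
    refine ⟨hbase, fun p hp => ?_⟩
    have hτp : (τ p : Fin n) = x := by rw [hcoe p, hp]
    refine ⟨hPτ.1 p hτp, ?_⟩
    have := hPτ.2 p
    rw [if_pos hτp] at this
    exact this
  have P_of_good : Good k i A x T g → ∀ τ : Fin i ≃ {a // a ∈ A},
      (∀ p, ((τ p : Fin n)) = (g p).1) →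
      ((∀ p : Fin i, ((τ p : Fin n) = x → i ≤ (p : ℕ) + 2)) ∧
        ∀ p : Fin i, (if (τ p : Fin n) = x then ∃ r ∈ T, g p = ⟨x, r⟩
          else (g p).1 = (τ p : Fin n))) := by
    intro hg τ hcoe
    constructor
    · intro p hp
      exact (hg.2 p (by rw [← hcoe p, hp])).1
    · intro p
      by_cases hp : (τ p : Fin n) = x
      · rw [if_pos hp]
        exact (hg.2 p (by rw [← hcoe p, hp])).2
      · rw [if_neg hp]
        exact (hcoe p).symm
  rw [Finset.sum_boole]
  by_cases hg : Good k i A x T g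
  · obtain ⟨τ₀, hτ₀⟩ := base_tau k hA hg.1
    have hfilter : (Finset.univ.filter fun τ : Fin i ≃ {a // a ∈ A} =>
        ((∀ p : Fin i, ((τ p : Fin n) = x → i ≤ (p : ℕ) + 2)) ∧
          ∀ p : Fin i, (if (τ p : Fin n) = x then ∃ r ∈ T, g p = ⟨x, r⟩
            else (g p).1 = (τ p : Fin n)))) = {τ₀} := by
      ext τ
      simp only [Finset.mem_filter, Finset.mem_univ, true_and, Finset.mem_singleton]
      constructor
      · intro hPτ
        refine Equiv.ext fun p => Subtype.ext ?_
        rw [coe_of_P τ hPτ p, hτ₀ p]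
      · rintro rfl
        exact P_of_good hg _ hτ₀
    rw [hfilter]
    simp [CInd, hg]
  · have hfilter : (Finset.univ.filter fun τ : Fin i ≃ {a // a ∈ A} =>
        ((∀ p : Fin i, ((τ p : Fin n) = x → i ≤ (p : ℕ) + 2)) ∧
          ∀ p : Fin i, (if (τ p : Fin n) = x then ∃ r ∈ T, g p = ⟨x, r⟩
            else (g p).1 = (τ p : Fin n)))) = ∅ :=
      Finset.filter_eq_empty_iff.mpr fun τ _ => fun hPτ => hg (good_of_P τ hPτ)
    rw [hfilter]
    simp [CInd, hg]

/-- The `Good` predicate in terms of the position of `x`. -/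
lemma good_iff {A : Finset (Fin n)} (hA : A.card = i) {g : Fin i → BIdx n k}
    {τ : Fin i ≃ {a // a ∈ A}} (hτ : ∀ p, ((τ p : Fin n)) = (g p).1)
    {x : Fin n} (hx : x ∈ A) (T : Finset (Fin (k x))) :
    Good k i A x T g ↔
      (Base k i A g ∧ i ≤ ((τ.symm ⟨x, hx⟩ : Fin i) : ℕ) + 2 ∧
        ∃ r ∈ T, g (τ.symm ⟨x, hx⟩) = ⟨x, r⟩) := by
  constructor
  · rintro ⟨hb, h3⟩
    refine ⟨hb, ?_⟩
    have hfst : (g (τ.symm ⟨x, hx⟩)).1 = x := by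
      rw [← hτ, Equiv.apply_symm_apply]
    exact h3 _ hfst
  · rintro ⟨hb, hbound, hex⟩
    refine ⟨hb, fun p hp => ?_⟩
    have ht : τ p = ⟨x, hx⟩ := Subtype.ext (by rw [hτ p, hp])
    have hpe : p = τ.symm ⟨x, hx⟩ := by rw [← ht, Equiv.symm_apply_apply]
    rw [hpe]
    exact ⟨hbound, hex⟩

lemma relation {A : Finset (Fin n)} (hA : A.card = i) (hi : 2 ≤ i) :
    ∑ s ∈ A.sigma (fun x => (Finset.univ : Finset (Fin (k x)))),
      CInd k i A s.1 {s.2} = (0 : (Fin i → BIdx n k) → F2) := by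
  classical
  funext g
  rw [Finset.sum_apply, Pi.zero_apply]
  by_cases hb : Base k i A g
  · obtain ⟨τ, hτ⟩ := base_tau k hA hb
    have step1 : ∀ a : {a // a ∈ A}, (∑ r : Fin (k a), CInd k i A (a : Fin n) {r} g)
        = if i ≤ ((τ.symm a : Fin i) : ℕ) + 2 then (1 : F2) else 0 := by
      intro a
      have hfst : (g (τ.symm a)).1 = (a : Fin n) := by
        rw [← hτ, Equiv.apply_symm_apply]
      obtain ⟨r₀, hr₀⟩ := sigma_fst_eq k hfst
      have hrw : ∀ r : Fin (k (a : Fin n)), CInd k i A (a : Fin n) {r} g =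
          if (i ≤ ((τ.symm a : Fin i) : ℕ) + 2 ∧ r₀ = r) then (1 : F2) else 0 := by
        intro r
        simp only [CInd]
        refine if_congr ?_ rfl rfl
        rw [good_iff k hA hτ a.2 {r}]
        constructor
        · rintro ⟨-, hbd, r', hr', heq⟩
          rw [Finset.mem_singleton] at hr'
          subst hr'
          refine ⟨hbd, ?_⟩
          have h2 := hr₀.symm.trans heq
          exact heq_iff_eq.mp (Sigma.ext_iff.mp h2).2
        · rintro ⟨hbd, rfl⟩
          exact ⟨hb, hbd, r₀, Finset.mem_singleton_self _, hr₀⟩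
      simp only [hrw]
      by_cases hc : i ≤ ((τ.symm a : Fin i) : ℕ) + 2
      · simp [hc]
      · simp [hc]
    rw [Finset.sum_sigma]
    rw [← Finset.sum_attach A (fun x => ∑ r : Fin (k x), CInd k i A x {r} g)]
    rw [← Finset.univ_eq_attach]
    rw [← Equiv.sum_comp τ (fun a : {a // a ∈ A} =>
      ∑ r : Fin (k (a : Fin n)), CInd k i A (a : Fin n) {r} g)]
    simp only [step1, Equiv.symm_apply_apply]
    rw [Finset.sum_boole]
    have hfl : Finset.univ.filter (fun p : Fin i => i ≤ (p : ℕ) + 2)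
        = {(⟨i - 2, by omega⟩ : Fin i), ⟨i - 1, by omega⟩} := by
      ext p
      have hp := p.2
      simp only [Finset.mem_filter, Finset.mem_univ, true_and, Finset.mem_insert,
        Finset.mem_singleton, Fin.ext_iff]
      omega
    rw [hfl]
    have hne : (⟨i - 2, by omega⟩ : Fin i) ∉ ({⟨i - 1, by omega⟩} : Finset (Fin i)) := by
      simp only [Finset.mem_singleton, Fin.ext_iff]
      omega
    rw [Finset.card_insert_of_notMem hne, Finset.card_singleton]
    decide
  · have hz : ∀ s ∈ A.sigma (fun x => (Finset.univ : Finset (Fin (k x)))),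
        CInd k i A s.1 {s.2} g = 0 := by
      intro s hs
      simp only [CInd]
      rw [if_neg fun hgood => hb hgood.1]
    rw [Finset.sum_congr rfl hz]
    simp

lemma CInd_T_eq_sum {A : Finset (Fin n)} {x : Fin n} (T : Finset (Fin (k x)))
    (hA : A.card = i) (hx : x ∈ A) :
    CInd k i A x T = ∑ r ∈ T, CInd k i A x {r} := by
  classical
  funext g
  rw [Finset.sum_apply]
  by_cases hb : Base k i A g
  · obtain ⟨τ, hτ⟩ := base_tau k hA hb
    have hfst : (g (τ.symm ⟨x, hx⟩)).1 = x := by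
      rw [← hτ, Equiv.apply_symm_apply]
    obtain ⟨r₀, hr₀⟩ := sigma_fst_eq k hfst
    have hmem : ∀ (S : Finset (Fin (k x))), CInd k i A x S g =
        if (i ≤ ((τ.symm ⟨x, hx⟩ : Fin i) : ℕ) + 2 ∧ r₀ ∈ S) then (1 : F2) else 0 := by
      intro S
      simp only [CInd]
      refine if_congr ?_ rfl rfl
      rw [good_iff k hA hτ hx S]
      constructor
      · rintro ⟨-, hbd, r', hr', heq⟩
        have h2 := hr₀.symm.trans heq
        have h3 : r₀ = r' := heq_iff_eq.mp (Sigma.ext_iff.mp h2).2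
        exact ⟨hbd, h3 ▸ hr'⟩
      · rintro ⟨hbd, hr⟩
        exact ⟨hb, hbd, r₀, hr, hr₀⟩
    rw [hmem T]
    have hmem2 : ∀ r ∈ T, CInd k i A x {r} g =
        if (i ≤ ((τ.symm ⟨x, hx⟩ : Fin i) : ℕ) + 2 ∧ r₀ = r) then (1 : F2) else 0 := by
      intro r _
      rw [hmem {r}]
      refine if_congr ?_ rfl rfl
      simp [Finset.mem_singleton]
    rw [Finset.sum_congr rfl hmem2]
    by_cases hc : i ≤ ((τ.symm ⟨x, hx⟩ : Fin i) : ℕ) + 2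
    · simp only [hc, true_and]
      by_cases hr : r₀ ∈ T
      · rw [if_pos hr]
        rw [Finset.sum_ite_eq T r₀ (fun _ => (1 : F2))]
        rw [if_pos hr]
      · rw [if_neg hr]
        rw [Finset.sum_ite_eq T r₀ (fun _ => (1 : F2))]
        rw [if_neg hr]
    · simp [hc]
  · have hz : CInd k i A x T g = 0 := by
      simp only [CInd]
      rw [if_neg fun hgood => hb hgood.1]
    have hz2 : ∀ r ∈ T, CInd k i A x {r} g = 0 := by
      intro r _
      simp only [CInd]
      rw [if_neg fun hgood => hb hgood.1]
    rw [hz, Finset.sum_congr rfl hz2]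
    simp

def dropP (A : Finset (Fin n)) (s : Σ x : Fin n, Fin (k x)) : Prop :=
  A.max = some s.1 ∧ (s.2 : ℕ) = 0

/-- The index set for the basis of `GovT`. -/
def SIdx (i : ℕ) : Type :=
  {q : Finset (Fin n) × (Σ x : Fin n, Fin (k x)) //
    q.1.card = i ∧ q.2.1 ∈ q.1 ∧ ¬ dropP k q.1 q.2}

noncomputable instance : Fintype (SIdx k i) := by
  classical
  unfold SIdx
  infer_instance

/-- The basis family. -/
noncomputable def bF (i : ℕ) : SIdx k i → ((Fin i → BIdx n k) → F2) :=
  fun q => CInd k i q.1.1 q.1.2.1 {q.1.2.2}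

lemma fun_add_eq_zero {α : Type} {f h : α → F2} (hfh : f + h = 0) : f = h := by
  have h2 : ∀ u v : F2, u + v = 0 → u = v := by decide
  funext a
  exact h2 _ _ (congrFun hfh a)

lemma mem_span_single (hk : ∀ j, 1 ≤ k j) (hi : 2 ≤ i) {A : Finset (Fin n)} {x : Fin n}
    (hA : A.card = i) (hx : x ∈ A) (r : Fin (k x)) :
    CInd k i A x {r} ∈ Submodule.span F2 (Set.range (bF k i)) := by
  classical
  by_cases hd : dropP k A ⟨x, r⟩
  · have hrel := relation k hA hi
    have hmem : (⟨x, r⟩ : Σ j, Fin (k j)) ∈ A.sigma fun x => (Finset.univ : Finset (Fin (k x))) := by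
      simp [Finset.mem_sigma, hx]
    have hsplit := Finset.add_sum_erase _ (fun s : Σ j, Fin (k j) => CInd k i A s.1 {s.2}) hmem
    rw [hrel] at hsplit
    have heq := fun_add_eq_zero hsplit
    simp only at heq
    rw [heq]
    refine Submodule.sum_mem _ fun s hs => ?_
    obtain ⟨hsne, hsmem⟩ := Finset.mem_erase.mp hs
    have hsA : s.1 ∈ A := (Finset.mem_sigma.mp hsmem).1
    have hnd : ¬ dropP k A s := by
      intro hds
      apply hsne
      obtain ⟨s1, s2⟩ := s
      have h1 : s1 = x := Option.some_inj.mp (hds.1.symm.trans hd.1)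
      subst h1
      have h2 : s2 = r := Fin.ext (by rw [hds.2, hd.2])
      rw [h2]
    exact Submodule.subset_span ⟨⟨(A, s), hA, hsA, hnd⟩, rfl⟩
  · exact Submodule.subset_span ⟨⟨(A, ⟨x, r⟩), hA, hx, hd⟩, rfl⟩

lemma exists_gtup (hk : ∀ j, 1 ≤ k j) (hi : 2 ≤ i) {A : Finset (Fin n)} {x y : Fin n}
    (hA : A.card = i) (hx : x ∈ A) (hy : y ∈ A) (hxy : x ≠ y) (r : Fin (k x)) :
    ∃ g : Fin i → BIdx n k,
      (∀ (A' : Finset (Fin n)) (x' : Fin n) (r' : Fin (k x')), A'.card = i → x' ∈ A' →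
        Good k i A' x' {r'} g → A' = A ∧
          ((⟨x', r'⟩ : Σ j, Fin (k j)) = ⟨x, r⟩ ∨
           (⟨x', r'⟩ : Σ j, Fin (k j)) = ⟨y, ⟨0, hk y⟩⟩)) ∧
      Good k i A x {r} g ∧ Good k i A y {⟨0, hk y⟩} g := by
  classical
  have e : Fin i ≃ {a // a ∈ A} := (A.equivFinOfCardEq hA).symm
  set lastp : Fin i := ⟨i - 1, by omega⟩ with hlastp
  set pen : Fin i := ⟨i - 2, by omega⟩ with hpen
  have hlp : pen ≠ lastp := Fin.ne_of_val_ne (by simp [hlastp, hpen]; omega)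
  set px : Fin i := e.symm ⟨x, hx⟩ with hpx
  set py : Fin i := e.symm ⟨y, hy⟩ with hpy
  have hpxy : px ≠ py := by
    intro h
    exact hxy (congrArg Subtype.val (e.symm.injective h : (⟨x, hx⟩ : {a // a ∈ A}) = ⟨y, hy⟩))
  set s1 := Equiv.swap px lastp with hs1
  set qq := s1 py with hqq
  have hqql : qq ≠ lastp := by
    intro h
    apply hpxy
    have h2 : s1 qq = s1 lastp := by rw [h]
    rw [hqq, Equiv.swap_apply_self, Equiv.swap_apply_right] at h2
    exact h2.symm
  set s2 := Equiv.swap qq pen with hs2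
  set τ : Fin i ≃ {a // a ∈ A} := (s2.trans s1).trans e with hτdef
  have hτ_last : τ lastp = ⟨x, hx⟩ := by
    show e (s1 (s2 lastp)) = _
    rw [hs2, Equiv.swap_apply_of_ne_of_ne (Ne.symm hqql) (Ne.symm hlp), hs1,
      Equiv.swap_apply_right, hpx, Equiv.apply_symm_apply]
  have hτ_pen : τ pen = ⟨y, hy⟩ := by
    show e (s1 (s2 pen)) = _
    rw [hs2, Equiv.swap_apply_right, hqq, Equiv.swap_apply_self, hpy,
      Equiv.apply_symm_apply]
  set g : Fin i → BIdx n k := fun p =>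
    if _h : ((τ p : Fin n)) = x then ⟨x, r⟩ else ⟨(τ p : Fin n), ⟨0, hk _⟩⟩ with hgdef
  have hg1 : ∀ p, (g p).1 = (τ p : Fin n) := by
    intro p
    by_cases h : ((τ p : Fin n)) = x
    · rw [hgdef]
      simp only
      rw [dif_pos h]
      exact h.symm
    · rw [hgdef]
      simp only
      rw [dif_neg h]
  have hbase : Base k i A g :=
    ⟨fun p q hpq => τ.injective (Subtype.ext (by rw [← hg1 p, ← hg1 q]; exact hpq)),
      fun p => by rw [hg1 p]; exact (τ p).2⟩
  have hglast : g lastp = ⟨x, r⟩ := by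
    rw [hgdef]
    simp only
    rw [dif_pos (by rw [hτ_last])]
  have hcy : (τ pen : Fin n) = y := by rw [hτ_pen]
  have hgpen : g pen = ⟨y, ⟨0, hk y⟩⟩ := by
    rw [hgdef]
    simp only
    rw [dif_neg (by rw [hcy]; exact fun h => hxy h.symm)]
    rw [hcy]
  have hposgen : ∀ (z : Fin n) (hz : z ∈ A) (p : Fin i), (g p).1 = z → p = τ.symm ⟨z, hz⟩ := by
    intro z hz p hp
    have h2 : τ p = ⟨z, hz⟩ := Subtype.ext ((hg1 p).symm.trans hp)
    rw [← h2, Equiv.symm_apply_apply]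
  refine ⟨g, ?_, ?_, ?_⟩
  · intro A' x' r' hA' hx' hgood
    have hsub : A ⊆ A' := by
      intro a ha
      have h2 : a = (g (τ.symm ⟨a, ha⟩)).1 := by
        rw [hg1, Equiv.apply_symm_apply]
      rw [h2]
      exact hgood.1.2 _
    have hAeq : A' = A := (Finset.eq_of_subset_of_card_le hsub (by omega)).symm
    refine ⟨hAeq, ?_⟩
    have hx'A : x' ∈ A := hAeq ▸ hx'
    have hfst : (g (τ.symm ⟨x', hx'A⟩)).1 = x' := by
      rw [hg1, Equiv.apply_symm_apply]
    obtain ⟨hbd, r'', hr'', heq⟩ := hgood.2 _ hfst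
    rw [Finset.mem_singleton] at hr''
    subst hr''
    have hv := (τ.symm ⟨x', hx'A⟩).isLt
    have hcases : τ.symm ⟨x', hx'A⟩ = pen ∨ τ.symm ⟨x', hx'A⟩ = lastp := by
      rw [Fin.ext_iff, Fin.ext_iff]
      simp only [hpen, hlastp]
      omega
    rcases hcases with hcc | hcc
    · right
      rw [hcc] at heq
      exact heq.symm.trans hgpen
    · left
      rw [hcc] at heq
      exact heq.symm.trans hglast
  · refine ⟨hbase, fun p hp => ?_⟩
    have hpl : p = τ.symm ⟨x, hx⟩ := hposgen x hx p hp
    have hpl2 : τ.symm ⟨x, hx⟩ = lastp := by rw [← hτ_last, Equiv.symm_apply_apply]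
    rw [hpl, hpl2]
    refine ⟨by simp only [hlastp]; omega, r, Finset.mem_singleton_self _, hglast⟩
  · refine ⟨hbase, fun p hp => ?_⟩
    have hpl : p = τ.symm ⟨y, hy⟩ := hposgen y hy p hp
    have hpl2 : τ.symm ⟨y, hy⟩ = pen := by rw [← hτ_pen, Equiv.symm_apply_apply]
    rw [hpl, hpl2]
    refine ⟨by simp only [hpen]; omega, ⟨0, hk y⟩, Finset.mem_singleton_self _, hgpen⟩

lemma indep (hk : ∀ j, 1 ≤ k j) (hi : 2 ≤ i) : LinearIndependent F2 (bF k i) := by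
  classical
  rw [Fintype.linearIndependent_iff]
  intro c hc
  have heval : ∀ g : Fin i → BIdx n k, (∑ q : SIdx k i, c q * (bF k i q g)) = 0 := by
    intro g
    have h0 := congrFun hc g
    rw [Finset.sum_apply] at h0
    simpa [smul_eq_mul] using h0
  have claim1 : ∀ q : SIdx k i, q.1.1.max ≠ some q.1.2.1 → c q = 0 := by
    rintro ⟨⟨A, x, r⟩, hA, hx, hnd⟩ hne
    simp only at hne hx hA ⊢
    have hAne : A.Nonempty := Finset.card_pos.mp (by omega)
    have hM : A.max = some (A.max' hAne) := (A.coe_max' hAne).symm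
    have hxM : x ≠ A.max' hAne := fun h => hne (by rw [h]; exact hM)
    obtain ⟨g, hkey, hgx, hgy⟩ := exists_gtup k hk hi hA hx (A.max'_mem hAne) hxM r
    have hs : (∑ q' : SIdx k i, c q' * bF k i q' g)
        = c ⟨(A, ⟨x, r⟩), hA, hx, hnd⟩ * bF k i ⟨(A, ⟨x, r⟩), hA, hx, hnd⟩ g := by
      refine Finset.sum_eq_single _ (fun q' _ hq' => ?_)
        (fun habs => absurd (Finset.mem_univ _) habs)
      by_cases hgq : Good k i q'.1.1 q'.1.2.1 {q'.1.2.2} g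
      · obtain ⟨hAeq, hpair⟩ := hkey q'.1.1 q'.1.2.1 q'.1.2.2 q'.2.1 q'.2.2.1 hgq
        rcases hpair with hp | hp
        · exact absurd (Subtype.ext (Prod.ext hAeq hp)) hq'
        · exfalso
          apply q'.2.2.2
          constructor
          · rw [hAeq, congrArg Sigma.fst hp]
            exact hM
          · have hv := congrArg (fun s : (Σ j, Fin (k j)) => (s.2 : ℕ)) hp
            simpa using hv
      · rw [show bF k i q' g = 0 from by simp only [bF, CInd]; rw [if_neg hgq], mul_zero]
    have h0 : c ⟨(A, ⟨x, r⟩), hA, hx, hnd⟩ * bF k i ⟨(A, ⟨x, r⟩), hA, hx, hnd⟩ g = 0 := by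
      rw [← hs]
      exact heval g
    rw [show bF k i (⟨(A, ⟨x, r⟩), hA, hx, hnd⟩ : SIdx k i) g = 1 from by
      simp only [bF, CInd]; rw [if_pos hgx], mul_one] at h0
    exact h0
  intro q
  by_cases hne : q.1.1.max = some q.1.2.1
  · obtain ⟨⟨A, x, r⟩, hA, hx, hnd⟩ := q
    simp only at hne hx hA ⊢
    have h1lt : 1 < A.card := by omega
    obtain ⟨y, hyA, hyx⟩ := Finset.exists_mem_ne h1lt x
    have hxy : x ≠ y := fun h => hyx h.symm
    obtain ⟨g, hkey, hgx, hgy⟩ := exists_gtup k hk hi hA hx hyA hxy r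
    have hs : (∑ q' : SIdx k i, c q' * bF k i q' g)
        = c ⟨(A, ⟨x, r⟩), hA, hx, hnd⟩ * bF k i ⟨(A, ⟨x, r⟩), hA, hx, hnd⟩ g := by
      refine Finset.sum_eq_single _ (fun q' _ hq' => ?_)
        (fun habs => absurd (Finset.mem_univ _) habs)
      by_cases hgq : Good k i q'.1.1 q'.1.2.1 {q'.1.2.2} g
      · obtain ⟨hAeq, hpair⟩ := hkey q'.1.1 q'.1.2.1 q'.1.2.2 q'.2.1 q'.2.2.1 hgq
        rcases hpair with hp | hp
        · exact absurd (Subtype.ext (Prod.ext hAeq hp)) hq'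
        · have hy' : q'.1.2.1 = y := congrArg Sigma.fst hp
          have hc0 : c q' = 0 := by
            refine claim1 q' ?_
            rw [hAeq, hy', hne]
            intro hcon
            exact hyx (Option.some_inj.mp hcon).symm
          rw [hc0, zero_mul]
      · rw [show bF k i q' g = 0 from by simp only [bF, CInd]; rw [if_neg hgq], mul_zero]
    have h0 : c ⟨(A, ⟨x, r⟩), hA, hx, hnd⟩ * bF k i ⟨(A, ⟨x, r⟩), hA, hx, hnd⟩ g = 0 := by
      rw [← hs]
      exact heval g
    rw [show bF k i (⟨(A, ⟨x, r⟩), hA, hx, hnd⟩ : SIdx k i) g = 1 from by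
      simp only [bF, CInd]; rw [if_pos hgx], mul_one] at h0
    exact h0
  · exact claim1 q hne

lemma span_eq (hk : ∀ j, 1 ≤ k j) (hi : 2 ≤ i) :
    Submodule.map (evalB (BIdx n k) i) (GovT k i)
      = Submodule.span F2 (Set.range (bF k i)) := by
  classical
  apply le_antisymm
  · rw [GovT, Submodule.map_span]
    refine Submodule.span_le.mpr ?_
    rintro _ ⟨φ, ⟨A, x, T, hA, hx, rfl⟩, rfl⟩
    rw [evalB_genGov k T hA hx, CInd_T_eq_sum k T hA hx]
    exact Submodule.sum_mem _ fun r _ => mem_span_single k hk hi hA hx r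
  · refine Submodule.span_le.mpr ?_
    rintro _ ⟨q, rfl⟩
    refine Submodule.mem_map.mpr
      ⟨genGovTensor k i q.1.1 q.1.2.1 {q.1.2.2},
        Submodule.subset_span ⟨q.1.1, q.1.2.1, {q.1.2.2}, q.2.1, q.2.2.1, rfl⟩,
        evalB_genGov k {q.1.2.2} q.2.1 q.2.2.1⟩

lemma card_SIdx (hk : ∀ j, 1 ≤ k j) (hi : 2 ≤ i) :
    Fintype.card (SIdx k i) = (∑ j, k j) * (n - 1).choose (i - 1) - n.choose i := by
  classical
  have hcard1 : Fintype.card (SIdx k i)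
      = ∑ A ∈ Finset.powersetCard i (Finset.univ : Finset (Fin n)), ((∑ x ∈ A, k x) - 1) := by
    have hc0 : Fintype.card (SIdx k i) = (Finset.univ.filter
        (fun q : Finset (Fin n) × (Σ x : Fin n, Fin (k x)) =>
          q.1.card = i ∧ q.2.1 ∈ q.1 ∧ ¬ dropP k q.1 q.2)).card := by
      unfold SIdx
      apply Fintype.card_of_subtype
      intro q
      simp only [Finset.mem_filter, Finset.mem_univ, true_and]
    rw [hc0]
    rw [Finset.card_filter, ← Finset.univ_product_univ, Finset.sum_product]
    have inner : ∀ A : Finset (Fin n), A.card = i →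
        (∑ s : Σ x : Fin n, Fin (k x),
          if ((A, s).1.card = i ∧ (A, s).2.1 ∈ (A, s).1 ∧ ¬ dropP k (A, s).1 (A, s).2)
            then (1 : ℕ) else 0)
          = (∑ x ∈ A, k x) - 1 := by
      intro A hcA
      have hAne : A.Nonempty := Finset.card_pos.mp (by omega)
      have hMmem := A.max'_mem hAne
      have hM : A.max = some (A.max' hAne) := (A.coe_max' hAne).symm
      rw [← Finset.univ_sigma_univ, Finset.sum_sigma]
      have hx_inner : ∀ x : Fin n,
          (∑ r : Fin (k x), if (A.card = i ∧ x ∈ A ∧ ¬ dropP k A ⟨x, r⟩) then (1 : ℕ) else 0)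
            = if x ∈ A then (if x = A.max' hAne then k x - 1 else k x) else 0 := by
        intro x
        by_cases hxA : x ∈ A
        · by_cases hxM : x = A.max' hAne
          · rw [if_pos hxA, if_pos hxM]
            have hMx : A.max = some x := by rw [hxM]; exact hM
            have hterm : ∀ r : Fin (k x),
                (if (A.card = i ∧ x ∈ A ∧ ¬ dropP k A ⟨x, r⟩) then (1 : ℕ) else 0)
                  = if (r : ℕ) = 0 then 0 else 1 := by
              intro r
              by_cases hr : (r : ℕ) = 0
              · rw [if_neg, if_pos hr]
                rintro ⟨-, -, hdr⟩
                exact hdr ⟨hMx, hr⟩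
              · rw [if_pos ⟨hcA, hxA, fun hdr => hr hdr.2⟩, if_neg hr]
            simp only [hterm]
            have hsw : ∀ r : Fin (k x), (if (r : ℕ) = 0 then (0 : ℕ) else 1)
                = if ¬ (r : ℕ) = 0 then 1 else 0 := by
              intro r
              by_cases hr : (r : ℕ) = 0
              · rw [if_pos hr, if_neg (not_not_intro hr)]
              · rw [if_neg hr, if_pos hr]
            simp only [hsw]
            rw [← Finset.card_filter]
            have hsplitc := Finset.card_filter_add_card_filter_not
              (s := (Finset.univ : Finset (Fin (k x)))) (p := fun r => ((r : ℕ) = 0))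
            have hone : (Finset.univ.filter (fun r : Fin (k x) => ((r : ℕ) = 0))).card = 1 := by
              rw [show Finset.univ.filter (fun r : Fin (k x) => ((r : ℕ) = 0))
                  = {(⟨0, hk x⟩ : Fin (k x))} from by
                ext r
                simp [Fin.ext_iff]]
              exact Finset.card_singleton _
            have hcu : (Finset.univ : Finset (Fin (k x))).card = k x := by
              rw [Finset.card_univ, Fintype.card_fin]
            omega
          · rw [if_pos hxA, if_neg hxM]
            have hterm : ∀ r : Fin (k x),
                (if (A.card = i ∧ x ∈ A ∧ ¬ dropP k A ⟨x, r⟩) then (1 : ℕ) else 0) = 1 := by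
              intro r
              exact if_pos ⟨hcA, hxA,
                fun hdr => hxM (Option.some_inj.mp (hM.symm.trans hdr.1)).symm⟩
            simp only [hterm]
            rw [Finset.sum_const, smul_eq_mul, mul_one, Finset.card_univ, Fintype.card_fin]
        · rw [if_neg hxA]
          have hterm : ∀ r : Fin (k x),
              (if (A.card = i ∧ x ∈ A ∧ ¬ dropP k A ⟨x, r⟩) then (1 : ℕ) else 0) = 0 :=
            fun r => if_neg (fun h => hxA h.2.1)
          simp only [hterm, Finset.sum_const_zero]
      rw [Finset.sum_congr rfl (fun x _ => hx_inner x)]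
      rw [← Finset.sum_filter, Finset.filter_univ_mem]
      have herase : ∀ x ∈ A.erase (A.max' hAne),
          (if x = A.max' hAne then k x - 1 else k x) = k x := by
        intro x hx
        rw [if_neg (Finset.ne_of_mem_erase hx)]
      have h4 := hk (A.max' hAne)
      rw [← Finset.add_sum_erase A (fun x => if x = A.max' hAne then k x - 1 else k x) hMmem,
        ← Finset.add_sum_erase A (fun x => k x) hMmem,
        Finset.sum_congr rfl herase, if_pos rfl]
      have hb : (A.erase (A.max' hAne)).sum k = ∑ x ∈ A.erase (A.max' hAne), k x := rfl
      omega
    have houter : ∀ A ∈ (Finset.univ : Finset (Finset (Fin n))),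
        (∑ s : Σ x : Fin n, Fin (k x),
          if ((A, s).1.card = i ∧ (A, s).2.1 ∈ (A, s).1 ∧ ¬ dropP k (A, s).1 (A, s).2)
            then (1 : ℕ) else 0)
          = if A.card = i then (∑ x ∈ A, k x) - 1 else 0 := by
      intro A _
      by_cases hcA : A.card = i
      · rw [if_pos hcA]
        exact inner A hcA
      · rw [if_neg hcA]
        have hterm : ∀ s : Σ x : Fin n, Fin (k x),
            (if ((A, s).1.card = i ∧ (A, s).2.1 ∈ (A, s).1 ∧ ¬ dropP k (A, s).1 (A, s).2)
              then (1 : ℕ) else 0) = 0 :=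
          fun s => if_neg (fun h => hcA h.1)
        simp only [hterm, Finset.sum_const_zero]
    rw [Finset.sum_congr rfl houter, ← Finset.sum_filter]
    congr 1
    rw [Finset.powersetCard_eq_filter, Finset.powerset_univ]
  have hlow : ∀ A ∈ Finset.powersetCard i (Finset.univ : Finset (Fin n)),
      1 ≤ ∑ x ∈ A, k x := by
    intro A hAmem
    obtain ⟨-, hcA⟩ := Finset.mem_powersetCard.mp hAmem
    have hAne : A.Nonempty := Finset.card_pos.mp (by omega)
    obtain ⟨x, hxA⟩ := hAne
    calc 1 ≤ k x := hk x
    _ ≤ ∑ x ∈ A, k x := Finset.single_le_sum (fun _ _ => Nat.zero_le _) hxA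
  have hcard2 : ∑ A ∈ Finset.powersetCard i (Finset.univ : Finset (Fin n)),
      ((∑ x ∈ A, k x) - 1)
      = (∑ A ∈ Finset.powersetCard i (Finset.univ : Finset (Fin n)), ∑ x ∈ A, k x)
        - n.choose i := by
    rw [Finset.sum_tsub_distrib _ hlow]
    congr 1
    rw [Finset.sum_const, smul_eq_mul, mul_one, Finset.card_powersetCard,
      Finset.card_univ, Fintype.card_fin]
  have hcount : ∀ x : Fin n,
      ((Finset.powersetCard i (Finset.univ : Finset (Fin n))).filter
        (fun A => x ∈ A)).card = (n - 1).choose (i - 1) := by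
    intro x
    have hsplitc := Finset.card_filter_add_card_filter_not
      (s := Finset.powersetCard i (Finset.univ : Finset (Fin n))) (p := fun A => x ∈ A)
    have hnotmem : (Finset.powersetCard i (Finset.univ : Finset (Fin n))).filter
        (fun A => ¬ x ∈ A)
        = Finset.powersetCard i ((Finset.univ : Finset (Fin n)).erase x) := by
      ext B
      simp only [Finset.mem_filter, Finset.mem_powersetCard, Finset.subset_erase]
      tauto
    rw [hnotmem] at hsplitc
    have hc1 : (Finset.powersetCard i (Finset.univ : Finset (Fin n))).card = n.choose i := by
      rw [Finset.card_powersetCard, Finset.card_univ, Fintype.card_fin]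
    have hc2 : (Finset.powersetCard i ((Finset.univ : Finset (Fin n)).erase x)).card
        = (n - 1).choose i := by
      rw [Finset.card_powersetCard, Finset.card_erase_of_mem (Finset.mem_univ x),
        Finset.card_univ, Fintype.card_fin]
    have hpascal : (n - 1).choose (i - 1) + (n - 1).choose i = n.choose i := by
      have hn : 0 < n := x.pos
      obtain ⟨m, rfl⟩ : ∃ m, n = m + 1 := ⟨n - 1, by omega⟩
      obtain ⟨j, rfl⟩ : ∃ j, i = j + 1 := ⟨i - 1, by omega⟩
      simp only [Nat.add_sub_cancel]
      rw [Nat.choose_succ_succ]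
    omega
  have hcard3 : (∑ A ∈ Finset.powersetCard i (Finset.univ : Finset (Fin n)), ∑ x ∈ A, k x)
      = (∑ j, k j) * (n - 1).choose (i - 1) := by
    have hAs : ∀ A ∈ Finset.powersetCard i (Finset.univ : Finset (Fin n)),
        (∑ x ∈ A, k x) = ∑ x : Fin n, if x ∈ A then k x else 0 := by
      intro A _
      rw [← Finset.sum_filter, Finset.filter_univ_mem]
    rw [Finset.sum_congr rfl hAs, Finset.sum_comm]
    have hxs : ∀ x : Fin n,
        (∑ A ∈ Finset.powersetCard i (Finset.univ : Finset (Fin n)),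
          if x ∈ A then k x else 0)
          = (n - 1).choose (i - 1) * k x := by
      intro x
      rw [← Finset.sum_filter, Finset.sum_const, smul_eq_mul, hcount x]
    rw [Finset.sum_congr rfl (fun x _ => hxs x), Finset.sum_mul]
    exact Finset.sum_congr rfl fun x _ => mul_comm _ _
  rw [hcard1, hcard2, hcard3]

end DimensionProof

/-- For every `(k_1,…,k_n) ∈ Z_{≥1}^n` and `i ≥ 2`,
`dim Gov~(V_{[k_1,…,k_n]}, i) = (k_1+⋯+k_n)·C(n−1, i−1) − C(n, i)`. -/
theorem statement2 (n : ℕ) (k : Fin n → ℕ) (hk : ∀ j, 1 ≤ k j) (i : ℕ) (hi : 2 ≤ i) :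
    Module.finrank F2 (GovT k i) = (∑ j, k j) * (n - 1).choose (i - 1) - n.choose i := by
  classical
  have hinj := evalB_injective (BIdx n k) i
  have e1 : Module.finrank F2 (GovT k i)
      = Module.finrank F2 ((GovT k i).map (evalB (BIdx n k) i)) :=
    (Submodule.equivMapOfInjective _ hinj _).finrank_eq
  rw [e1, span_eq k hk hi, finrank_span_eq_card (indep k hk hi), card_SIdx k hk hi]

end HigherGenus
end

section
/- If (G, φ, (g_1,…,g_n)) is an n-expansion group, then the associated graded object L_•(G) of the lower central series of G is an F2-vector space, and ((L_•(G), [,]_G), L_•(φ)) is an n-expansion Lie algebra. -/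
namespace HigherGenus

variable {ι : Type} [Fintype ι] [DecidableEq ι]

/-- The right-nested bracket `[σ_1,[σ_2,[…,[σ_{i−1},σ_i]…]]]`. -/
def nest {L : Type} [AddCommGroup L] [Module F2 L]
    (br : L →ₗ[F2] L →ₗ[F2] L) : {i : ℕ} → (Fin i → L) → L
  | 0, _ => 0
  | 1, σ => σ 0
  | (_+2), σ => br (σ 0) (nest br (Fin.tail σ))

/-- `(L_•, ψ)` (presented by a bracket `br`, graded pieces `piece m` for `m ≥ 1` with
`piece 0 = ⊥`, and `ψ`) is an expansion Lie algebra over the index set `ι`. -/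
structure IsExpLie {ι : Type} [Fintype ι] [DecidableEq ι] {L : Type}
    [AddCommGroup L] [Module F2 L]
    (br : L →ₗ[F2] L →ₗ[F2] L) (piece : ℕ → Submodule F2 L)
    (ψ : L →ₗ[F2] V ι) : Prop where
  /-- the grading starts in degree 1 -/
  piece_zero : piece 0 = ⊥
  /-- the graded pieces are independent … -/
  indep : iSupIndep piece
  /-- … and give a direct sum decomposition of `L` -/
  span_top : (⨆ m, piece m) = ⊤
  /-- `[L_h, L_k] ⊆ L_{h+k}` -/
  graded : ∀ h k : ℕ, ∀ x ∈ piece h, ∀ y ∈ piece k, br x y ∈ piece (h + k)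
  /-- the bracket is alternating -/
  br_self : ∀ x, br x x = 0
  /-- the Jacobi identity -/
  jacobi : ∀ x y z, br x (br y z) + br y (br z x) + br z (br x y) = 0
  /-- `ψ` is surjective -/
  psi_surj : Function.Surjective ψ
  /-- `ψ` is a homomorphism of graded Lie algebras: it kills brackets
  (the target has the zero bracket) … -/
  psi_br : ∀ x y, ψ (br x y) = 0
  /-- … and it kills every graded piece of degree `≠ 1`
  (the target is concentrated in degree 1) -/
  psi_graded : ∀ m : ℕ, m ≠ 1 → ∀ x ∈ piece m, ψ x = 0
  /-- `ker ψ` is an abelian subalgebra -/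
  ker_abelian : ∀ x y, ψ x = 0 → ψ y = 0 → br x y = 0
  /-- `[L_•, L_•] = ker ψ` -/
  comm_eq_ker : Submodule.span F2 {z | ∃ x y, z = br x y} = LinearMap.ker ψ
  /-- for `i ≥ 4`, nested brackets with entries in `L_1` are unchanged under any permutation
  of the first `i − 2` entries -/
  perm_invariant : ∀ (m : ℕ) (σ : Fin (m + 4) → L), (∀ p, σ p ∈ piece 1) →
    ∀ e : Equiv.Perm (Fin (m + 4)), (∀ p : Fin (m + 4), m + 2 ≤ (p : ℕ) → e p = p) →
    nest br (σ ∘ e) = nest br σ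
  /-- for `i ≥ 4`, nested brackets with entries in `L_1` vanish as soon as two of the first
  `i − 2` entries coincide -/
  repeat_vanish : ∀ (m : ℕ) (σ : Fin (m + 4) → L), (∀ p, σ p ∈ piece 1) →
    (∃ s t : Fin (m + 4), s ≠ t ∧ (s : ℕ) < m + 2 ∧ (t : ℕ) < m + 2 ∧ σ s = σ t) →
    nest br σ = 0
  /-- `[τ_1,[τ_1,τ_2]] = 0` for `τ_1, τ_2 ∈ L_1` with `ψ(τ_1)` a standard basis vector -/
  basis_bracket_sq : ∀ x y : L, x ∈ piece 1 → y ∈ piece 1 →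
    (∃ j : ι, ψ x = stdb j) → br x (br x y) = 0

/-- A bundled expansion Lie algebra over the index set `ι`. -/
structure ExpLieAlg (ι : Type) [Fintype ι] [DecidableEq ι] where
  L : Type
  [acg : AddCommGroup L]
  [mod : Module F2 L]
  br : L →ₗ[F2] L →ₗ[F2] L
  piece : ℕ → Submodule F2 L
  psi : L →ₗ[F2] V ι
  isexp : IsExpLie br piece psi

attribute [instance] ExpLieAlg.acg ExpLieAlg.mod

/-- A homomorphism of expansion Lie algebras: a linear map commuting with the brackets,
preserving the gradings, and compatible with the structure maps `ψ`. -/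
def IsExpLieHom {ι : Type} [Fintype ι] [DecidableEq ι] (E E' : ExpLieAlg ι)
    (f : E.L →ₗ[F2] E'.L) : Prop :=
  (∀ x y, f (E.br x y) = E'.br (f x) (f y)) ∧
  (∀ m : ℕ, ∀ x ∈ E.piece m, f x ∈ E'.piece m) ∧
  (∀ x, E'.psi (f x) = E.psi x)
/-- `(G, φ, (g_j)_{j ∈ ι})` is an expansion group over the index set `ι`:
`φ(g_j) = e_j`, `ker φ` is an elementary abelian `2`-group, `[G,G] = ker φ`,
and the `g_j` are involutions. -/
structure IsExpGroup {ι : Type} [DecidableEq ι] {G : Type} [Group G]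
    (φ : G →* Multiplicative (V ι)) (g : ι → G) : Prop where
  phi_g : ∀ j, φ (g j) = Multiplicative.ofAdd (stdb j)
  ker_comm : ∀ a b : G, φ a = 1 → φ b = 1 → a * b = b * a
  ker_sq : ∀ a : G, φ a = 1 → a ^ 2 = 1
  comm_eq_ker : commutator G = φ.ker
  g_sq : ∀ j, g j ^ 2 = 1

/-- `augPow G k` is the subgroup `I^k·[G,G]` of `G`: the augmentation-ideal filtration of the
`F2[G/[G,G]]`-module `[G,G]`, written multiplicatively.  (The augmentation ideal `I` is spanned
over `F2` by the elements `1 + s̄`, and `(1 + s̄)·m` corresponds to `m · (s m s⁻¹)`.) -/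
def augPow (G : Type) [Group G] : ℕ → Subgroup G
  | 0 => commutator G
  | (k + 1) => Subgroup.closure {x | ∃ s : G, ∃ m ∈ augPow G k, x = m * (s * m * s⁻¹)}

/-- The `m`-th graded quotient `G^(m+1)/G^(m+2)` of the lower central series of `G`
(`(⊤ : Subgroup G).lowerCentralSeries m = G^(m+1)` in the paper's 1-based indexing). -/
def lcsQ (G : Type) [Group G] (m : ℕ) : Type :=
  ↥((⊤ : Subgroup G).lowerCentralSeries m) ⧸
    (((⊤ : Subgroup G).lowerCentralSeries (m + 1)).subgroupOf ((⊤ : Subgroup G).lowerCentralSeries m))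

open scoped commutatorElement

section AssocGradedConstruction

section HFree

variable {G : Type} [Group G]

abbrev QT (G : Type) [Group G] (m : ℕ) :=
  ↥((⊤ : Subgroup G).lowerCentralSeries m) ⧸
    (((⊤ : Subgroup G).lowerCentralSeries (m + 1)).subgroupOf ((⊤ : Subgroup G).lowerCentralSeries m))

lemma lcs_succ_comm {m : ℕ} {p : G} (q : G) (hp : p ∈ (⊤ : Subgroup G).lowerCentralSeries m) :
    ⁅p, q⁆ ∈ (⊤ : Subgroup G).lowerCentralSeries (m + 1) := by
  rw [Subgroup.mem_lowerCentralSeries_succ_iff]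
  exact Subgroup.subset_closure ⟨p, hp, q, Subgroup.mem_top q, rfl⟩

lemma lcs_succ_comm' {m : ℕ} (p : G) {q : G} (hq : q ∈ (⊤ : Subgroup G).lowerCentralSeries m) :
    ⁅p, q⁆ ∈ (⊤ : Subgroup G).lowerCentralSeries (m + 1) := by
  have h2 := inv_mem (lcs_succ_comm (m := m) p hq)
  rwa [commutatorElement_inv] at h2

instance lcsQCommGroup (G : Type) [Group G] (m : ℕ) : CommGroup (QT G m) :=
  { (inferInstance : Group (QT G m)) with
    mul_comm := by
      intro a b
      refine QuotientGroup.induction_on a fun x => ?_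
      refine QuotientGroup.induction_on b fun y => ?_
      rw [← QuotientGroup.mk_mul, ← QuotientGroup.mk_mul, QuotientGroup.eq]
      rw [Subgroup.mem_subgroupOf]
      have e : (((x * y)⁻¹ * (y * x) : ↥((⊤ : Subgroup G).lowerCentralSeries m)) : G)
          = ⁅(y : G)⁻¹, (x : G)⁻¹⁆ := by
        push_cast
        group
      rw [e]
      exact lcs_succ_comm _ (inv_mem y.2) }

/-- the subgroup of "doubles" -/
def dbl (A : Type) [AddCommGroup A] : AddSubgroup A where
  carrier := {x | ∃ y, y + y = x}
  zero_mem' := ⟨0, add_zero 0⟩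
  add_mem' := by rintro a b ⟨y, rfl⟩ ⟨z, rfl⟩; exact ⟨y + z, by abel⟩
  neg_mem' := by rintro a ⟨y, rfl⟩; exact ⟨-y, by abel⟩

abbrev PmQ (G : Type) [Group G] (m : ℕ) : Type :=
  Additive (QT G m) ⧸ dbl (Additive (QT G m))

instance (m : ℕ) : Module F2 (PmQ G m) :=
  QuotientAddGroup.zmodModule (n := 2) (fun x => ⟨x, (two_nsmul x).symm⟩)

abbrev PP (G : Type) [Group G] : ℕ → Type
  | 0 => PUnit
  | m + 1 => PmQ G m

instance : ∀ m, AddCommGroup (PP G m)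
  | 0 => inferInstanceAs (AddCommGroup PUnit)
  | (m+1) => inferInstanceAs (AddCommGroup (PmQ G m))

instance : ∀ m, Module F2 (PP G m)
  | 0 => inferInstanceAs (Module F2 PUnit)
  | (m+1) => inferInstanceAs (Module F2 (PmQ G m))

abbrev LL (G : Type) [Group G] := DirectSum ℕ (PP G)

noncomputable def lofP (G : Type) [Group G] (m : ℕ) : PP G m →ₗ[F2] LL G :=
  DirectSum.lof F2 ℕ (PP G) m

def mkk (m : ℕ) (x : G) (hx : x ∈ (⊤ : Subgroup G).lowerCentralSeries m) : PmQ G m :=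
  QuotientAddGroup.mk (Additive.ofMul (QuotientGroup.mk (⟨x, hx⟩ : ↥((⊤ : Subgroup G).lowerCentralSeries m)) : QT G m))

lemma mkk_congr {m : ℕ} {x y : G} (e : x = y) (hx : x ∈ (⊤ : Subgroup G).lowerCentralSeries m)
    (hy : y ∈ (⊤ : Subgroup G).lowerCentralSeries m) : mkk m x hx = mkk m y hy := by subst e; rfl

lemma mkk_mul {m : ℕ} {x y : G} (hx : x ∈ (⊤ : Subgroup G).lowerCentralSeries m)
    (hy : y ∈ (⊤ : Subgroup G).lowerCentralSeries m) (hxy : x * y ∈ (⊤ : Subgroup G).lowerCentralSeries m) :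
    mkk m (x * y) hxy = mkk m x hx + mkk m y hy := rfl

lemma mkk_one {m : ℕ} (hx : (1 : G) ∈ (⊤ : Subgroup G).lowerCentralSeries m) : mkk m 1 hx = 0 := rfl

lemma mkk_eq {m : ℕ} {x y : G} (hx : x ∈ (⊤ : Subgroup G).lowerCentralSeries m)
    (hy : y ∈ (⊤ : Subgroup G).lowerCentralSeries m) (hd : x⁻¹ * y ∈ (⊤ : Subgroup G).lowerCentralSeries (m + 1)) :
    mkk m x hx = mkk m y hy := by
  unfold mkk
  have : (QuotientGroup.mk (⟨x, hx⟩ : ↥((⊤ : Subgroup G).lowerCentralSeries m)) : QT G m)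
      = QuotientGroup.mk ⟨y, hy⟩ := by
    rw [QuotientGroup.eq, Subgroup.mem_subgroupOf]
    simpa using hd
  rw [this]

lemma mkk_eq_zero {m : ℕ} {x : G} (hx : x ∈ (⊤ : Subgroup G).lowerCentralSeries m)
    (hx' : x ∈ (⊤ : Subgroup G).lowerCentralSeries (m + 1)) : mkk m x hx = 0 := by
  have := mkk_eq (m := m) hx (one_mem _) (by simpa using inv_mem hx')
  rw [this, mkk_one]

lemma mkk_inv {m : ℕ} {x : G} (hx : x ∈ (⊤ : Subgroup G).lowerCentralSeries m)
    (hx' : x⁻¹ ∈ (⊤ : Subgroup G).lowerCentralSeries m) : mkk m x⁻¹ hx' = - mkk m x hx := by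
  have h1 : mkk m (x⁻¹ * x) (mul_mem hx' hx) = mkk m x⁻¹ hx' + mkk m x hx := mkk_mul _ _ _
  rw [mkk_congr (inv_mul_cancel x) _ (one_mem _), mkk_one] at h1
  exact eq_neg_of_add_eq_zero_left h1.symm

lemma pm_ind {m : ℕ} (p : PmQ G m) : ∃ (x : G) (hx : x ∈ (⊤ : Subgroup G).lowerCentralSeries m), p = mkk m x hx := by
  refine QuotientAddGroup.induction_on p fun a => ?_
  obtain ⟨z, hz⟩ := QuotientGroup.mk_surjective (Additive.toMul a)
  refine ⟨z.1, z.2, ?_⟩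
  show QuotientAddGroup.mk a = QuotientAddGroup.mk (Additive.ofMul (QuotientGroup.mk ⟨z.1, z.2⟩))
  congr 1
  rw [show (⟨z.1, z.2⟩ : ↥((⊤ : Subgroup G).lowerCentralSeries m)) = z from rfl, hz]
  rfl

lemma pm_two {m : ℕ} (p : PmQ G m) : p + p = 0 := by
  refine QuotientAddGroup.induction_on p fun a => ?_
  rw [← QuotientAddGroup.mk_add, QuotientAddGroup.eq_zero_iff]
  exact ⟨a, rfl⟩

/-- lift a function on group elements to `PmQ` -/
noncomputable def liftPm {m : ℕ} {N : Type} [AddCommGroup N]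
    (f : ∀ x : G, x ∈ (⊤ : Subgroup G).lowerCentralSeries m → N)
    (hadd : ∀ x y hx hy hxy, f (x * y) hxy = f x hx + f y hy)
    (hker : ∀ x (_ : x ∈ (⊤ : Subgroup G).lowerCentralSeries (m + 1)) hx, f x hx = 0)
    (htwo : ∀ v : N, v + v = 0) : PmQ G m →+ N := by
  have fone : f 1 (one_mem _) = 0 := by
    have h1 := hadd 1 1 (one_mem _) (one_mem _) (by simpa using (one_mem ((⊤ : Subgroup G).lowerCentralSeries m)))
    have e : f (1 * 1) (by simpa using (one_mem ((⊤ : Subgroup G).lowerCentralSeries m))) = f 1 (one_mem _) := by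
      congr 1; · exact one_mul 1
    rw [e] at h1
    exact left_eq_add.mp h1
  refine QuotientAddGroup.lift _ (MonoidHom.toAdditiveLeft (QuotientGroup.lift _
    { toFun := fun x : ↥((⊤ : Subgroup G).lowerCentralSeries m) => Multiplicative.ofAdd (f x.1 x.2)
      map_one' := by simpa using fone
      map_mul' := by
        intro x y
        exact congrArg Multiplicative.ofAdd (hadd x.1 y.1 x.2 y.2 (mul_mem x.2 y.2)) } ?_)) ?_
  · intro x hx
    have := hker x.1 (Subgroup.mem_subgroupOf.mp hx) x.2
    simpa using this
  · rintro a ⟨y, rfl⟩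
    simpa using htwo _

lemma liftPm_mkk {m : ℕ} {N : Type} [AddCommGroup N]
    (f : ∀ x : G, x ∈ (⊤ : Subgroup G).lowerCentralSeries m → N) (hadd hker htwo) (x : G)
    (hx : x ∈ (⊤ : Subgroup G).lowerCentralSeries m) :
    liftPm f hadd hker htwo (mkk m x hx) = f x hx := rfl

end HFree

section HDep

set_option linter.unusedSectionVars false

variable {ι : Type} [Fintype ι] [DecidableEq ι]
variable {G : Type} [Group G] {φ : G →* Multiplicative (V ι)} {g : ι → G}

lemma vadd_self (w : V ι) : w + w = 0 := by
  funext j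
  show w j + w j = 0
  have : ∀ a : F2, a + a = 0 := by decide
  exact this _

lemma phiker (h : IsExpGroup φ g) {x : G} (hx : x ∈ commutator G) : φ x = 1 := by
  rw [h.comm_eq_ker] at hx
  exact hx

lemma lcs_ker (h : IsExpGroup φ g) {m : ℕ} {x : G}
    (hx : x ∈ (⊤ : Subgroup G).lowerCentralSeries (m + 1)) : φ x = 1 := by
  refine phiker h ?_
  have := (⊤ : Subgroup G).lowerCentralSeries_antitone (show 1 ≤ m + 1 by omega) hx
  rwa [lowerCentralSeries_one] at this

lemma phi_comm (h : IsExpGroup φ g) (x y : G) : φ ⁅x, y⁆ = 1 := by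
  refine phiker h ?_
  rw [commutator_def]
  exact Subgroup.commutator_mem_commutator (Subgroup.mem_top x) (Subgroup.mem_top y)

lemma ksq (h : IsExpGroup φ g) {x : G} (hx : φ x = 1) : x * x = 1 := by
  have := h.ker_sq x hx
  rwa [pow_two] at this

lemma kinv (h : IsExpGroup φ g) {x : G} (hx : φ x = 1) : x⁻¹ = x :=
  inv_eq_of_mul_eq_one_right (ksq h hx)

lemma phi_sq (h : IsExpGroup φ g) (x : G) : φ (x * x) = 1 := by
  rw [map_mul]
  calc φ x * φ x
      = Multiplicative.ofAdd (Multiplicative.toAdd (φ x) + Multiplicative.toAdd (φ x)) := rfl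
  _ = Multiplicative.ofAdd 0 := by rw [vadd_self]
  _ = 1 := rfl

lemma conj_ker (h : IsExpGroup φ g) {c x : G} (hc : φ c = 1) (hx : φ x = 1) :
    c * x * c⁻¹ = x := by
  rw [h.ker_comm c x hc hx, mul_inv_cancel_right]

lemma csym (h : IsExpGroup φ g) (x y : G) : ⁅x, y⁆ = ⁅y, x⁆ := by
  rw [← commutatorElement_inv, kinv h (phi_comm h y x)]

lemma comm_mem (h : IsExpGroup φ g) {a b : ℕ} {x y : G} (hx : x ∈ (⊤ : Subgroup G).lowerCentralSeries a)
    (hy : y ∈ (⊤ : Subgroup G).lowerCentralSeries b) : ⁅x, y⁆ ∈ (⊤ : Subgroup G).lowerCentralSeries (a + b + 1) := by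
  match a, b with
  | 0, b =>
    show ⁅x, y⁆ ∈ (⊤ : Subgroup G).lowerCentralSeries (0 + b + 1)
    rw [Nat.zero_add]
    exact lcs_succ_comm' x hy
  | a + 1, 0 => exact lcs_succ_comm y hx
  | a + 1, b + 1 =>
    have e : ⁅x, y⁆ = 1 := by
      rw [commutatorElement_eq_one_iff_mul_comm]
      exact h.ker_comm x y (lcs_ker h hx) (lcs_ker h hy)
    rw [e]; exact one_mem _

lemma ker3 (h : IsExpGroup φ g) {p q d : G} (hp : φ p = 1) (hq : φ q = 1) (hd : φ d = 1) :
    (p * q)⁻¹ * (d * (q * p)) = d := by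
  have hqp : φ (q * p) = 1 := by rw [map_mul, hq, hp, mul_one]
  rw [h.ker_comm d (q * p) hd hqp]
  rw [show (q * p) * d = (q * p) * d from rfl, ← mul_assoc]
  rw [show (p * q)⁻¹ * (q * p) = (p * q)⁻¹ * (p * q) by rw [h.ker_comm q p hq hp]]
  rw [inv_mul_cancel, one_mul]

lemma ker3' (h : IsExpGroup φ g) {p q d : G} (hp : φ p = 1) (hq : φ q = 1) (hd : φ d = 1) :
    (p * q)⁻¹ * (p * (d * q)) = d := by
  have : p * (d * q) = d * (q * p) := by
    rw [h.ker_comm p (d * q) hp (by rw [map_mul, hd, hq, mul_one]), mul_assoc]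
  rw [this]
  exact ker3 h hp hq hd

/-- Jacobi identity, exactly, in metabelian-with-exponent-2-kernel groups. -/
lemma jac_group (h : IsExpGroup φ g) (x y z : G) :
    ⁅x, ⁅y, z⁆⁆ * ⁅y, ⁅z, x⁆⁆ * ⁅z, ⁅x, y⁆⁆ = 1 := by
  rw [mul_assoc]
  have key : ∀ u c w : G, φ u = 1 → φ c = 1 → ⁅u, c * w⁆ = ⁅u, w⁆ := by
    intro u c w hu hc
    have e1 : ⁅u, c * w⁆ = (u * c) * (w * u⁻¹ * w⁻¹) * c⁻¹ := by group
    rw [h.ker_comm u c hu hc] at e1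
    have e2 : (c * u) * (w * u⁻¹ * w⁻¹) * c⁻¹ = c * ⁅u, w⁆ * c⁻¹ := by group
    rw [e1, e2, conj_ker h hc (phi_comm h u w)]
  have t : ∀ p q r : G, p * ⁅⁅p⁻¹, q⁆, r⁆ * p⁻¹ = ⁅⁅q, p⁆, ⁅p, r⁆ * r⁆ := by
    intro p q r; group
  have leftnorm : ∀ a b c : G, ⁅⁅a, b⁆, c⁆ * (⁅⁅b, c⁆, a⁆ * ⁅⁅c, a⁆, b⁆) = 1 := by
    intro a b c
    have hw : (b * ⁅⁅b⁻¹, a⁆, c⁆ * b⁻¹) * ((c * ⁅⁅c⁻¹, b⁆, a⁆ * c⁻¹) *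
        (a * ⁅⁅a⁻¹, c⁆, b⁆ * a⁻¹)) = 1 := by group
    rw [t b a c, t c b a, t a c b,
      key _ _ _ (phi_comm h a b) (phi_comm h b c),
      key _ _ _ (phi_comm h b c) (phi_comm h c a),
      key _ _ _ (phi_comm h c a) (phi_comm h a b)] at hw
    exact hw
  rw [csym h x ⁅y, z⁆, csym h y ⁅z, x⁆, csym h z ⁅x, y⁆]
  exact leftnorm y z x

lemma sqr_group (h : IsExpGroup φ g) (x : G) {w : G} (hw : φ w = 1) :
    ⁅x, ⁅x, w⁆⁆ = 1 := by
  set t := x * w * x⁻¹ with ht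
  have hφt : φ t = 1 := by
    rw [ht, map_mul, map_mul, hw, mul_one, map_inv]
    group
  have e1 : ⁅x, ⁅x, w⁆⁆ = (x * t * x⁻¹) * (x * w⁻¹ * x⁻¹) * w * t⁻¹ := by
    rw [ht]; group
  have e2 : x * t * x⁻¹ = w := by
    rw [ht]
    have := conj_ker h (phi_sq h x) hw
    calc x * (x * w * x⁻¹) * x⁻¹ = (x * x) * w * (x * x)⁻¹ := by group
    _ = w := this
  have e3 : x * w⁻¹ * x⁻¹ = t⁻¹ := by rw [ht]; group
  rw [e1, e2, e3]
  -- w * t⁻¹ * w * t⁻¹ = 1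
  have hwt : φ (w * t⁻¹) = 1 := by
    rw [map_mul, hw, map_inv, hφt]; group
  have : w * t⁻¹ * (w * t⁻¹) = 1 := ksq h hwt
  calc w * t⁻¹ * w * t⁻¹ = w * t⁻¹ * (w * t⁻¹) := by group
  _ = 1 := this


lemma mem_lcs_zero (x : G) : x ∈ (⊤ : Subgroup G).lowerCentralSeries 0 := by
  rw [Subgroup.lowerCentralSeries_zero]; trivial

lemma mkk_brL (h : IsExpGroup φ g) {a b : ℕ} {x x' y : G}
    (hx : x ∈ (⊤ : Subgroup G).lowerCentralSeries a) (hx' : x' ∈ (⊤ : Subgroup G).lowerCentralSeries a)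
    (hy : y ∈ (⊤ : Subgroup G).lowerCentralSeries b) :
    mkk (a+b+1) ⁅x * x', y⁆ (comm_mem h (mul_mem hx hx') hy)
      = mkk (a+b+1) ⁅x, y⁆ (comm_mem h hx hy) + mkk (a+b+1) ⁅x', y⁆ (comm_mem h hx' hy) := by
  rw [← mkk_mul (comm_mem h hx hy) (comm_mem h hx' hy)
    (mul_mem (comm_mem h hx hy) (comm_mem h hx' hy))]
  refine mkk_eq _ _ ?_
  have hd : ⁅x, ⁅x', y⁆⁆ ∈ (⊤ : Subgroup G).lowerCentralSeries (a + b + 1 + 1) := by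
    have := comm_mem h (mem_lcs_zero x) (comm_mem h hx' hy)
    have e : 0 + (a + b + 1) + 1 = a + b + 1 + 1 := by omega
    rwa [e] at this
  have key : ⁅x * x', y⁆ = ⁅x, ⁅x', y⁆⁆ * (⁅x', y⁆ * ⁅x, y⁆) := by group
  have main : (⁅x, y⁆ * ⁅x', y⁆)⁻¹ * ⁅x * x', y⁆ = ⁅x, ⁅x', y⁆⁆ := by
    rw [key]
    exact ker3 h (phi_comm h x y) (phi_comm h x' y) (phi_comm h x ⁅x', y⁆)
  have e2 : (⁅x * x', y⁆)⁻¹ * (⁅x, y⁆ * ⁅x', y⁆)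
      = ((⁅x, y⁆ * ⁅x', y⁆)⁻¹ * ⁅x * x', y⁆)⁻¹ := by group
  rw [e2, main]
  exact inv_mem hd

lemma mkk_brR (h : IsExpGroup φ g) {a b : ℕ} {x y y' : G}
    (hx : x ∈ (⊤ : Subgroup G).lowerCentralSeries a) (hy : y ∈ (⊤ : Subgroup G).lowerCentralSeries b)
    (hy' : y' ∈ (⊤ : Subgroup G).lowerCentralSeries b) :
    mkk (a+b+1) ⁅x, y * y'⁆ (comm_mem h hx (mul_mem hy hy'))
      = mkk (a+b+1) ⁅x, y⁆ (comm_mem h hx hy) + mkk (a+b+1) ⁅x, y'⁆ (comm_mem h hx hy') := by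
  rw [← mkk_mul (comm_mem h hx hy) (comm_mem h hx hy')
    (mul_mem (comm_mem h hx hy) (comm_mem h hx hy'))]
  refine mkk_eq _ _ ?_
  have hd : ⁅y, ⁅x, y'⁆⁆ ∈ (⊤ : Subgroup G).lowerCentralSeries (a + b + 1 + 1) := by
    have := comm_mem h hy (comm_mem h hx hy')
    exact (⊤ : Subgroup G).lowerCentralSeries_antitone (show a + b + 1 + 1 ≤ b + (a + b + 1) + 1 by omega) this
  have key : ⁅x, y * y'⁆ = ⁅x, y⁆ * (⁅y, ⁅x, y'⁆⁆ * ⁅x, y'⁆) := by group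
  have main : (⁅x, y⁆ * ⁅x, y'⁆)⁻¹ * ⁅x, y * y'⁆ = ⁅y, ⁅x, y'⁆⁆ := by
    rw [key]
    exact ker3' h (phi_comm h x y) (phi_comm h x y') (phi_comm h y ⁅x, y'⁆)
  have e2 : (⁅x, y * y'⁆)⁻¹ * (⁅x, y⁆ * ⁅x, y'⁆)
      = ((⁅x, y⁆ * ⁅x, y'⁆)⁻¹ * ⁅x, y * y'⁆)⁻¹ := by group
  rw [e2, main]
  exact inv_mem hd

lemma hom_two {A B : Type} [AddCommGroup A] [AddCommGroup B] (htwo : ∀ b : B, b + b = 0)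
    (F : A →+ B) : F + F = 0 := by
  ext p
  simpa using htwo (F p)

/-- the bracket on graded quotients, as an `AddMonoidHom` pairing -/
noncomputable def cbrA (h : IsExpGroup φ g) (a b : ℕ) :
    PmQ G a →+ (PmQ G b →+ PmQ G (a + b + 1)) :=
  liftPm
    (fun x hx => liftPm (fun y hy => mkk (a+b+1) ⁅x, y⁆ (comm_mem h hx hy))
      (fun y y' hy hy' _ => mkk_brR h hx hy hy')
      (fun y hy' _ => mkk_eq_zero _ (comm_mem h (a := a) (b := b + 1) hx hy'))
      pm_two)
    (fun x x' hx hx' _ => by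
      refine DFunLike.ext _ _ fun p => ?_
      obtain ⟨y, hy, rfl⟩ := pm_ind p
      exact mkk_brL h hx hx' hy)
    (fun x hx' hx => by
      refine DFunLike.ext _ _ fun p => ?_
      obtain ⟨y, hy, rfl⟩ := pm_ind p
      refine mkk_eq_zero _ ?_
      have := comm_mem h hx' hy
      have e : a + 1 + b + 1 = a + b + 1 + 1 := by omega
      rwa [e] at this)
    (hom_two pm_two)

lemma cbrA_mkk (h : IsExpGroup φ g) {a b : ℕ} {x y : G} (hx : x ∈ (⊤ : Subgroup G).lowerCentralSeries a)
    (hy : y ∈ (⊤ : Subgroup G).lowerCentralSeries b) :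
    cbrA h a b (mkk a x hx) (mkk b y hy) = mkk (a+b+1) ⁅x, y⁆ (comm_mem h hx hy) := rfl

lemma f2_cases (c : F2) : c = 0 ∨ c = 1 := by revert c; decide

/-- the bracket pairing as a bilinear map -/
noncomputable def cbrL (h : IsExpGroup φ g) (a b : ℕ) :
    PmQ G a →ₗ[F2] PmQ G b →ₗ[F2] PmQ G (a + b + 1) :=
  LinearMap.mk₂ F2 (fun p q => cbrA h a b p q)
    (fun p p' q => by simp only [map_add, AddMonoidHom.add_apply])
    (fun c p q => by
      rcases f2_cases c with hc | hc <;> subst hc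
      · simp only [zero_smul, map_zero, AddMonoidHom.zero_apply]
      · simp only [one_smul])
    (fun p q q' => by simp only [map_add])
    (fun c p q => by
      rcases f2_cases c with hc | hc <;> subst hc
      · simp only [zero_smul, map_zero]
      · simp only [one_smul])


noncomputable def brc (h : IsExpGroup φ g) : ∀ i j : ℕ, PP G i →ₗ[F2] PP G j →ₗ[F2] LL G
  | 0, _ => 0
  | _ + 1, 0 => 0
  | a + 1, b + 1 => (cbrL h a b).compr₂ (lofP G (a + b + 2))

noncomputable def brin (h : IsExpGroup φ g) (i : ℕ) : PP G i →ₗ[F2] LL G →ₗ[F2] LL G where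
  toFun p := DirectSum.toModule F2 ℕ (LL G) fun j => brc h i j p
  map_add' p p' := by
    refine DirectSum.linearMap_ext _ fun j => ?_
    ext q
    simp only [LinearMap.coe_comp, Function.comp_apply, DirectSum.toModule_lof, map_add,
      LinearMap.add_apply]
  map_smul' c p := by
    refine DirectSum.linearMap_ext _ fun j => ?_
    ext q
    simp only [LinearMap.coe_comp, Function.comp_apply, DirectSum.toModule_lof, map_smul,
      LinearMap.smul_apply, RingHom.id_apply]

noncomputable def brr (h : IsExpGroup φ g) : LL G →ₗ[F2] LL G →ₗ[F2] LL G :=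
  DirectSum.toModule F2 ℕ _ (brin h)

lemma brr_lof (h : IsExpGroup φ g) (i j : ℕ) (p : PP G i) (q : PP G j) :
    brr h (lofP G i p) (lofP G j q) = brc h i j p q := by
  unfold brr lofP
  rw [DirectSum.toModule_lof]
  show DirectSum.toModule F2 ℕ (LL G) (fun j => brc h i j p) (DirectSum.lof F2 ℕ (PP G) j q) = _
  rw [DirectSum.toModule_lof]

lemma brr_mkk (h : IsExpGroup φ g) {a b : ℕ} {x y : G} (hx : x ∈ (⊤ : Subgroup G).lowerCentralSeries a)
    (hy : y ∈ (⊤ : Subgroup G).lowerCentralSeries b) :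
    brr h (lofP G (a+1) (mkk a x hx)) (lofP G (b+1) (mkk b y hy))
      = lofP G (a+b+2) (mkk (a+b+1) ⁅x, y⁆ (comm_mem h hx hy)) := by
  rw [brr_lof]
  rfl

noncomputable def psic (h : IsExpGroup φ g) : ∀ m, PP G m →ₗ[F2] V ι
  | 0 => 0
  | 1 => AddMonoidHom.toZModLinearMap 2
      (liftPm (fun x _ => Multiplicative.toAdd (φ x))
        (fun x y _ _ _ => by simp [map_mul])
        (fun x hx' _ => by
          show Multiplicative.toAdd (φ x) = 0
          rw [lcs_ker h (m := 0) hx']; rfl)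
        vadd_self)
  | (_ + 2) => 0

noncomputable def psiL (h : IsExpGroup φ g) : LL G →ₗ[F2] V ι :=
  DirectSum.toModule F2 ℕ _ (psic h)

lemma psiL_lof1 (h : IsExpGroup φ g) {x : G} (hx : x ∈ (⊤ : Subgroup G).lowerCentralSeries 0) :
    psiL h (lofP G 1 (mkk 0 x hx)) = Multiplicative.toAdd (φ x) := by
  unfold psiL lofP
  rw [DirectSum.toModule_lof]
  rfl

noncomputable def pieceP (G : Type) [Group G] : ℕ → Submodule F2 (LL G) :=
  fun m => LinearMap.range (lofP G m)

lemma psiL_eq_comp (h : IsExpGroup φ g) (x : LL G) :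
    psiL h x = psic h 1 (DirectSum.component F2 ℕ (PP G) 1 x) := by
  have : psiL h = (psic h 1).comp (DirectSum.component F2 ℕ (PP G) 1) := by
    refine DirectSum.linearMap_ext _ fun i => ?_
    refine LinearMap.ext fun p => ?_
    simp only [LinearMap.coe_comp, Function.comp_apply]
    show psiL h (DirectSum.lof F2 ℕ (PP G) i p) = _
    unfold psiL
    rw [DirectSum.toModule_lof, DirectSum.component.of]
    match i with
    | 0 =>
      rw [dif_neg (by omega)]
      simp only [map_zero]
      rfl
    | 1 => rw [dif_pos rfl]
    | (k + 2) =>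
      rw [dif_neg (by omega)]
      simp only [map_zero]
      rfl
  rw [this]; rfl


instance : Subsingleton (PP G 0) := inferInstanceAs (Subsingleton PUnit)

lemma lofP_eq_of (i : ℕ) (p : PP G i) : lofP G i p = DirectSum.of (PP G) i p := rfl

lemma lofmk_congr {m m' : ℕ} (e : m = m') {x : G} (hx : x ∈ (⊤ : Subgroup G).lowerCentralSeries m)
    (hx' : x ∈ (⊤ : Subgroup G).lowerCentralSeries m') :
    lofP G (m + 1) (mkk m x hx) = lofP G (m' + 1) (mkk m' x hx') := by subst e; rfl

lemma two_LL (u : LL G) : u + u = 0 := by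
  have e : ((1 : F2) + 1) = 0 := by decide
  calc u + u = (1 : F2) • u + (1 : F2) • u := by rw [one_smul]
  _ = ((1 : F2) + 1) • u := by rw [add_smul]
  _ = 0 := by rw [e, zero_smul]

lemma eq_of_add_eq_zero_LL {u v : LL G} (e : u + v = 0) : u = v := by
  have := two_LL v
  calc u = u + (v + v) := by rw [this, add_zero]
  _ = (u + v) + v := by abel
  _ = v := by rw [e, zero_add]

lemma piece_zeroP : pieceP G 0 = ⊥ := by
  rw [eq_bot_iff]
  rintro x ⟨a, rfl⟩
  rw [Subsingleton.elim a 0, map_zero]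
  exact Submodule.zero_mem ⊥

lemma span_topP : (⨆ m, pieceP G m) = ⊤ := by
  classical
  rw [eq_top_iff]
  intro x _
  rw [← DirectSum.sum_support_of x]
  refine Submodule.sum_mem _ fun i _ => ?_
  refine Submodule.mem_iSup_of_mem i ?_
  exact ⟨x i, lofP_eq_of i (x i)⟩

lemma component_lof_ne {i j : ℕ} (hij : j ≠ i) (p : PP G j) :
    DirectSum.component F2 ℕ (PP G) i (lofP G j p) = 0 := by
  rw [lofP, DirectSum.component.of, dif_neg hij]

lemma indepP : iSupIndep (pieceP G) := by
  intro i
  rw [disjoint_iff_inf_le]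
  rintro x ⟨hx1, hx2⟩
  obtain ⟨a, rfl⟩ := hx1
  have hle : (⨆ j, ⨆ _ : j ≠ i, pieceP G j)
      ≤ LinearMap.ker (DirectSum.component F2 ℕ (PP G) i) := by
    refine iSup_le fun j => iSup_le fun hj => ?_
    rintro z ⟨b, rfl⟩
    rw [LinearMap.mem_ker]
    exact component_lof_ne hj b
  have h0 : DirectSum.component F2 ℕ (PP G) i (lofP G i a) = 0 := hle hx2
  rw [lofP, DirectSum.component.lof_self] at h0
  subst h0
  rw [map_zero]
  exact Submodule.zero_mem ⊥

lemma gradedP (h : IsExpGroup φ g) :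
    ∀ hh kk : ℕ, ∀ x ∈ pieceP G hh, ∀ y ∈ pieceP G kk, brr h x y ∈ pieceP G (hh + kk) := by
  rintro hh kk x ⟨a, rfl⟩ y ⟨b, rfl⟩
  rw [brr_lof]
  match hh, kk with
  | 0, k =>
    rw [show brc h 0 k = 0 from rfl]
    simp only [LinearMap.zero_apply]
    exact Submodule.zero_mem _
  | a' + 1, 0 =>
    rw [show brc h (a' + 1) 0 = 0 from rfl]
    simp only [LinearMap.zero_apply]
    exact Submodule.zero_mem _
  | a' + 1, b' + 1 =>
    have e : a' + 1 + (b' + 1) = a' + b' + 2 := by omega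
    rw [e]
    exact ⟨cbrL h a' b' a b, rfl⟩

lemma br_ext (h : IsExpGroup φ g) {f f' : LL G →ₗ[F2] LL G →ₗ[F2] LL G}
    (H : ∀ i j (p : PP G i) (q : PP G j),
      f (lofP G i p) (lofP G j q) = f' (lofP G i p) (lofP G j q)) : f = f' := by
  refine DirectSum.linearMap_ext _ fun i => ?_
  refine LinearMap.ext fun p => ?_
  refine DirectSum.linearMap_ext _ fun j => ?_
  refine LinearMap.ext fun q => ?_
  exact H i j p q

lemma brsym (h : IsExpGroup φ g) (x y : LL G) : brr h x y = brr h y x := by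
  have e : brr h = (brr h).flip := by
    refine br_ext h fun i j p q => ?_
    rw [LinearMap.flip_apply, brr_lof, brr_lof]
    match i, j with
    | 0, j =>
      rw [show brc h 0 j = 0 from rfl]
      have hp : p = 0 := Subsingleton.elim p 0
      subst hp
      simp only [LinearMap.zero_apply, map_zero]
    | i' + 1, 0 =>
      rw [show brc h (i' + 1) 0 = 0 from rfl]
      have hq : q = 0 := Subsingleton.elim q 0
      subst hq
      simp only [LinearMap.zero_apply, map_zero]
    | a + 1, b + 1 =>
      obtain ⟨xx, hxx, rfl⟩ := pm_ind p
      obtain ⟨yy, hyy, rfl⟩ := pm_ind q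
      show lofP G (a + b + 2) (mkk (a + b + 1) ⁅xx, yy⁆ (comm_mem h hxx hyy))
        = lofP G (b + a + 2) (mkk (b + a + 1) ⁅yy, xx⁆ (comm_mem h hyy hxx))
      rw [show lofP G (a + b + 2) (mkk (a + b + 1) ⁅xx, yy⁆ (comm_mem h hxx hyy))
          = lofP G (a + b + 2) (mkk (a + b + 1) ⁅yy, xx⁆
            ((csym h xx yy) ▸ (comm_mem h hxx hyy))) from by
        congr 1
        exact mkk_congr (csym h xx yy) _ _]
      exact lofmk_congr (by omega) _ _
  conv_lhs => rw [e]
  rw [LinearMap.flip_apply]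

lemma br_diag (h : IsExpGroup φ g) (x : LL G) : brr h x x = 0 := by
  induction x using DirectSum.induction_on with
  | zero => simp
  | of i p =>
    rw [← lofP_eq_of, brr_lof]
    match i with
    | 0 =>
      rw [show brc h 0 0 = 0 from rfl]
      simp only [LinearMap.zero_apply]
    | m + 1 =>
      obtain ⟨xx, hxx, rfl⟩ := pm_ind p
      show lofP G (m + m + 2) (mkk (m + m + 1) ⁅xx, xx⁆ (comm_mem h hxx hxx)) = 0
      rw [mkk_congr (commutatorElement_self xx) _ (one_mem _), mkk_one, map_zero]
  | add x y ihx ihy =>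
    simp only [map_add, LinearMap.add_apply, ihx, ihy, add_zero, zero_add]
    rw [brsym h x y]
    exact two_LL _

lemma jacobiP (h : IsExpGroup φ g) (x y z : LL G) :
    brr h x (brr h y z) + brr h y (brr h z x) + brr h z (brr h x y) = 0 := by
  induction x using DirectSum.induction_on with
  | zero => simp
  | add x₁ x₂ ih1 ih2 =>
    rw [map_add, LinearMap.add_apply, map_add, map_add, LinearMap.add_apply, map_add]
    calc brr h x₁ (brr h y z) + brr h x₂ (brr h y z)
          + (brr h y (brr h z x₁) + brr h y (brr h z x₂))
          + (brr h z (brr h x₁ y) + brr h z (brr h x₂ y))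
        = (brr h x₁ (brr h y z) + brr h y (brr h z x₁) + brr h z (brr h x₁ y))
          + (brr h x₂ (brr h y z) + brr h y (brr h z x₂) + brr h z (brr h x₂ y)) := by abel
    _ = 0 := by rw [ih1, ih2, add_zero]
  | of i p =>
    induction y using DirectSum.induction_on with
    | zero => simp
    | add y₁ y₂ ih1 ih2 =>
      rw [map_add, map_add, LinearMap.add_apply, map_add, LinearMap.add_apply, map_add]
      calc brr h (DirectSum.of (PP G) i p) (brr h y₁ z) + brr h (DirectSum.of (PP G) i p) (brr h y₂ z)
            + (brr h y₁ (brr h z (DirectSum.of (PP G) i p)) + brr h y₂ (brr h z (DirectSum.of (PP G) i p)))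
            + (brr h z (brr h (DirectSum.of (PP G) i p) y₁) + brr h z (brr h (DirectSum.of (PP G) i p) y₂))
          = (brr h (DirectSum.of (PP G) i p) (brr h y₁ z) + brr h y₁ (brr h z (DirectSum.of (PP G) i p))
              + brr h z (brr h (DirectSum.of (PP G) i p) y₁))
            + (brr h (DirectSum.of (PP G) i p) (brr h y₂ z) + brr h y₂ (brr h z (DirectSum.of (PP G) i p))
              + brr h z (brr h (DirectSum.of (PP G) i p) y₂)) := by abel
      _ = 0 := by rw [ih1, ih2, add_zero]
    | of j q =>
      induction z using DirectSum.induction_on with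
      | zero => simp
      | add z₁ z₂ ih1 ih2 =>
        rw [map_add, map_add, map_add, LinearMap.add_apply, map_add, LinearMap.add_apply]
        calc _ = (brr h (DirectSum.of (PP G) i p) (brr h (DirectSum.of (PP G) j q) z₁)
              + brr h (DirectSum.of (PP G) j q) (brr h z₁ (DirectSum.of (PP G) i p))
              + brr h z₁ (brr h (DirectSum.of (PP G) i p) (DirectSum.of (PP G) j q)))
            + (brr h (DirectSum.of (PP G) i p) (brr h (DirectSum.of (PP G) j q) z₂)
              + brr h (DirectSum.of (PP G) j q) (brr h z₂ (DirectSum.of (PP G) i p))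
              + brr h z₂ (brr h (DirectSum.of (PP G) i p) (DirectSum.of (PP G) j q))) := by abel
        _ = 0 := by rw [ih1, ih2, add_zero]
      | of k r =>
        rw [← lofP_eq_of, ← lofP_eq_of, ← lofP_eq_of]
        match i, j, k with
        | 0, j, k =>
          have hp : p = 0 := Subsingleton.elim p 0
          subst hp
          simp only [map_zero, LinearMap.zero_apply, add_zero]
        | i, 0, k =>
          have hq : q = 0 := Subsingleton.elim q 0
          subst hq
          simp only [map_zero, LinearMap.zero_apply, add_zero]
        | i, j, 0 =>
          have hr : r = 0 := Subsingleton.elim r 0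
          subst hr
          simp only [map_zero, LinearMap.zero_apply, add_zero]
        | a + 1, b + 1, c + 1 =>
          obtain ⟨xx, hxx, rfl⟩ := pm_ind p
          obtain ⟨yy, hyy, rfl⟩ := pm_ind q
          obtain ⟨zz, hzz, rfl⟩ := pm_ind r
          have M1 : ⁅xx, ⁅yy, zz⁆⁆ ∈ (⊤ : Subgroup G).lowerCentralSeries (a + b + c + 2) := by
            have := comm_mem h hxx (comm_mem h hyy hzz)
            have e : a + (b + c + 1) + 1 = a + b + c + 2 := by omega
            rwa [e] at this
          have M2 : ⁅yy, ⁅zz, xx⁆⁆ ∈ (⊤ : Subgroup G).lowerCentralSeries (a + b + c + 2) := by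
            have := comm_mem h hyy (comm_mem h hzz hxx)
            have e : b + (c + a + 1) + 1 = a + b + c + 2 := by omega
            rwa [e] at this
          have M3 : ⁅zz, ⁅xx, yy⁆⁆ ∈ (⊤ : Subgroup G).lowerCentralSeries (a + b + c + 2) := by
            have := comm_mem h hzz (comm_mem h hxx hyy)
            have e : c + (a + b + 1) + 1 = a + b + c + 2 := by omega
            rwa [e] at this
          rw [brr_mkk h hyy hzz, brr_mkk h hzz hxx, brr_mkk h hxx hyy,
            brr_mkk h hxx (comm_mem h hyy hzz), brr_mkk h hyy (comm_mem h hzz hxx),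
            brr_mkk h hzz (comm_mem h hxx hyy)]
          rw [lofmk_congr (show a + (b + c + 1) + 1 = a + b + c + 2 by omega) _ M1,
            lofmk_congr (show b + (c + a + 1) + 1 = a + b + c + 2 by omega) _ M2,
            lofmk_congr (show c + (a + b + 1) + 1 = a + b + c + 2 by omega) _ M3]
          rw [← map_add, ← map_add, ← mkk_mul M1 M2 (mul_mem M1 M2),
            ← mkk_mul (mul_mem M1 M2) M3 (mul_mem (mul_mem M1 M2) M3)]
          rw [mkk_congr (jac_group h xx yy zz) _ (one_mem _), mkk_one, map_zero]


lemma psi1_inj (h : IsExpGroup φ g) (p : PmQ G 0) (hp : psic h 1 p = 0) : p = 0 := by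
  obtain ⟨x, hx, rfl⟩ := pm_ind p
  have hval : Multiplicative.toAdd (φ x) = 0 := hp
  have hφ : φ x = 1 := by
    calc φ x = Multiplicative.ofAdd (Multiplicative.toAdd (φ x)) := rfl
    _ = Multiplicative.ofAdd 0 := by rw [hval]
    _ = 1 := rfl
  refine mkk_eq_zero _ ?_
  show x ∈ (⊤ : Subgroup G).lowerCentralSeries 1
  rw [Subgroup.top_lowerCentralSeries_one, h.comm_eq_ker]
  exact hφ

lemma comp1_zero (h : IsExpGroup φ g) {x : LL G} (hx : psiL h x = 0) :
    DirectSum.component F2 ℕ (PP G) 1 x = 0 := by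
  refine psi1_inj h _ ?_
  rw [← psiL_eq_comp h x]
  exact hx

lemma component1_br (h : IsExpGroup φ g) (x y : LL G) :
    DirectSum.component F2 ℕ (PP G) 1 (brr h x y) = 0 := by
  induction x using DirectSum.induction_on with
  | zero => simp
  | add x₁ x₂ ih1 ih2 => rw [map_add, LinearMap.add_apply, map_add, ih1, ih2, add_zero]
  | of i p =>
    induction y using DirectSum.induction_on with
    | zero => simp
    | add y₁ y₂ ih1 ih2 => rw [map_add, map_add, ih1, ih2, add_zero]
    | of j q =>
      rw [← lofP_eq_of, ← lofP_eq_of, brr_lof]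
      match i, j with
      | 0, j =>
        rw [show brc h 0 j = 0 from rfl]
        simp
      | i' + 1, 0 =>
        rw [show brc h (i' + 1) 0 = 0 from rfl]
        simp
      | a + 1, b + 1 =>
        show DirectSum.component F2 ℕ (PP G) 1 (lofP G (a + b + 2) (cbrL h a b p q)) = 0
        exact component_lof_ne (by omega) _

lemma psi_brP (h : IsExpGroup φ g) (x y : LL G) : psiL h (brr h x y) = 0 := by
  rw [psiL_eq_comp, component1_br, map_zero]

lemma supp_cases (h : IsExpGroup φ g) {x : LL G}
    (hx1 : DirectSum.component F2 ℕ (PP G) 1 x = 0) {i : ℕ} (hi : x i ≠ 0) :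
    ∃ m : ℕ, i = m + 2 := by
  match i with
  | 0 => exact absurd (Subsingleton.elim (x 0) 0) hi
  | 1 => exact absurd hx1 hi
  | m + 2 => exact ⟨m, rfl⟩

lemma ker_abelianP (h : IsExpGroup φ g) (x y : LL G) (hx : psiL h x = 0)
    (hy : psiL h y = 0) : brr h x y = 0 := by
  classical
  have hx1 := comp1_zero h hx
  have hy1 := comp1_zero h hy
  rw [← DirectSum.sum_support_of x, ← DirectSum.sum_support_of y, map_sum]
  refine Finset.sum_eq_zero fun j hj => ?_
  rw [map_sum, LinearMap.sum_apply]
  refine Finset.sum_eq_zero fun i hi => ?_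
  obtain ⟨a, rfl⟩ := supp_cases h hx1 (DFinsupp.mem_support_iff.mp hi)
  obtain ⟨b, rfl⟩ := supp_cases h hy1 (DFinsupp.mem_support_iff.mp hj)
  rw [← lofP_eq_of, ← lofP_eq_of]
  obtain ⟨u, hu, eu⟩ := pm_ind (x (a + 2))
  obtain ⟨v, hv, ev⟩ := pm_ind (y (b + 2))
  rw [eu, ev, brr_mkk h hu hv]
  rw [mkk_congr (show ⁅u, v⁆ = 1 from commutatorElement_eq_one_iff_mul_comm.mpr
    (h.ker_comm u v (lcs_ker h hu) (lcs_ker h hv))) _ (one_mem _), mkk_one, map_zero]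

lemma lof_mem_span (h : IsExpGroup φ g) (m : ℕ) (u : G)
    (hu : u ∈ (⊤ : Subgroup G).lowerCentralSeries (m + 1)) :
    lofP G (m + 2) (mkk (m + 1) u hu)
      ∈ Submodule.span F2 {z : LL G | ∃ x y, z = brr h x y} := by
  have hu' : u ∈ Subgroup.closure {x : G | ∃ p ∈ (⊤ : Subgroup G).lowerCentralSeries m,
      ∃ q ∈ (⊤ : Subgroup G), ⁅p, q⁆ = x} := by
    rwa [← Subgroup.mem_lowerCentralSeries_succ_iff]
  revert hu
  induction hu' using Subgroup.closure_induction with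
  | mem w hw =>
    intro hu
    obtain ⟨p, hp, q, -, rfl⟩ := hw
    have e : lofP G (m + 2) (mkk (m + 1) ⁅p, q⁆ hu)
        = brr h (lofP G (m + 1) (mkk m p hp)) (lofP G 1 (mkk 0 q (mem_lcs_zero q))) :=
      (brr_mkk h hp (mem_lcs_zero q)).symm
    rw [e]
    exact Submodule.subset_span ⟨_, _, rfl⟩
  | one =>
    intro hu
    rw [mkk_one, map_zero]
    exact Submodule.zero_mem _
  | mul w1 w2 hw1 hw2 ih1 ih2 =>
    intro hu
    have m1 : w1 ∈ (⊤ : Subgroup G).lowerCentralSeries (m + 1) := by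
      rwa [Subgroup.mem_lowerCentralSeries_succ_iff]
    have m2 : w2 ∈ (⊤ : Subgroup G).lowerCentralSeries (m + 1) := by
      rwa [Subgroup.mem_lowerCentralSeries_succ_iff]
    rw [mkk_mul m1 m2 hu, map_add]
    exact Submodule.add_mem _ (ih1 m1) (ih2 m2)
  | inv w hw ih =>
    intro hu
    have m1 : w ∈ (⊤ : Subgroup G).lowerCentralSeries (m + 1) := by
      rwa [Subgroup.mem_lowerCentralSeries_succ_iff]
    rw [mkk_inv m1 hu, map_neg]
    exact Submodule.neg_mem _ (ih m1)

lemma comm_eq_kerP (h : IsExpGroup φ g) :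
    Submodule.span F2 {z : LL G | ∃ x y, z = brr h x y} = LinearMap.ker (psiL h) := by
  classical
  refine le_antisymm (Submodule.span_le.mpr ?_) ?_
  · rintro z ⟨x, y, rfl⟩
    rw [SetLike.mem_coe, LinearMap.mem_ker]
    exact psi_brP h x y
  · intro x hx
    rw [LinearMap.mem_ker] at hx
    have hx1 := comp1_zero h hx
    rw [← DirectSum.sum_support_of x]
    refine Submodule.sum_mem _ fun i hi => ?_
    obtain ⟨m, rfl⟩ := supp_cases h hx1 (DFinsupp.mem_support_iff.mp hi)
    obtain ⟨u, hu, eu⟩ := pm_ind (x (m + 2))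
    rw [← lofP_eq_of, eu]
    exact lof_mem_span h m u hu

lemma psi_surjP (h : IsExpGroup φ g) : Function.Surjective (psiL h) := by
  classical
  suffices hS : ∀ v : V ι, ∃ x : G, φ x = Multiplicative.ofAdd v by
    intro v
    obtain ⟨x, hx⟩ := hS v
    refine ⟨lofP G 1 (mkk 0 x (mem_lcs_zero x)), ?_⟩
    rw [psiL_lof1 h, hx]
    rfl
  intro v
  let S : Submodule F2 (V ι) :=
    { carrier := {v | ∃ x : G, φ x = Multiplicative.ofAdd v}
      zero_mem' := ⟨1, by rw [map_one]; rfl⟩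
      add_mem' := by
        rintro v w ⟨x, hx⟩ ⟨y, hy⟩
        exact ⟨x * y, by rw [map_mul, hx, hy]; rfl⟩
      smul_mem' := by
        rintro c v ⟨x, hx⟩
        rcases f2_cases c with hc | hc <;> subst hc
        · exact ⟨1, by rw [map_one, zero_smul]; rfl⟩
        · exact ⟨x, by rwa [one_smul]⟩ }
  suffices hv : v ∈ S from hv
  have : v = ∑ j, Pi.single j (v j) := (Finset.univ_sum_single v).symm
  rw [this]
  refine Submodule.sum_mem _ fun j _ => ?_
  rcases f2_cases (v j) with hc | hc <;> rw [hc]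
  · rw [Pi.single_zero]
    exact Submodule.zero_mem S
  · exact ⟨g j, h.phi_g j⟩

lemma brackSqP (h : IsExpGroup φ g) (x : LL G) (hx1 : x ∈ pieceP G 1) (X : LL G)
    (hX : psiL h X = 0) : brr h x (brr h x X) = 0 := by
  classical
  obtain ⟨p, rfl⟩ := hx1
  obtain ⟨u, hu, rfl⟩ := pm_ind p
  have hX1 := comp1_zero h hX
  rw [← DirectSum.sum_support_of X, map_sum, map_sum]
  refine Finset.sum_eq_zero fun j hj => ?_
  obtain ⟨m, rfl⟩ := supp_cases h hX1 (DFinsupp.mem_support_iff.mp hj)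
  obtain ⟨v, hv, ev⟩ := pm_ind (X (m + 2))
  rw [← lofP_eq_of, ev]
  have e0 : (0 : ℕ) + (m + 1) + 1 = m + 2 := by omega
  have M1 : ⁅u, v⁆ ∈ (⊤ : Subgroup G).lowerCentralSeries (m + 2) := by
    have := comm_mem h (a := 0) hu hv
    rwa [e0] at this
  rw [show lofP G 1 (mkk 0 u hu) = lofP G (0 + 1) (mkk 0 u hu) from rfl]
  rw [brr_mkk h hu hv, lofmk_congr e0 _ M1, brr_mkk h hu M1]
  rw [mkk_congr (sqr_group h u (lcs_ker h hv)) _ (one_mem _), mkk_one, map_zero]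


lemma psi_gradedP (h : IsExpGroup φ g) (m : ℕ) (hm : m ≠ 1) (x : LL G)
    (hx : x ∈ pieceP G m) : psiL h x = 0 := by
  obtain ⟨a, rfl⟩ := hx
  rw [psiL_eq_comp, component_lof_ne hm, map_zero]

noncomputable def nestList (h : IsExpGroup φ g) (l : List (LL G)) (X : LL G) : LL G :=
  l.foldr (fun a Y => brr h a Y) X

lemma psi_nestList (h : IsExpGroup φ g) (l : List (LL G)) (X : LL G)
    (hX : psiL h X = 0) : psiL h (nestList h l X) = 0 := by
  induction l with
  | nil => exact hX
  | cons a l ih => exact psi_brP h a _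

lemma br_comm_ker (h : IsExpGroup φ g) (a b X : LL G) (hX : psiL h X = 0) :
    brr h a (brr h b X) = brr h b (brr h a X) := by
  have j := jacobiP h a b X
  rw [brsym h X a] at j
  rw [ker_abelianP h X (brr h a b) hX (psi_brP h a b), add_zero] at j
  exact eq_of_add_eq_zero_LL j

lemma nestList_perm (h : IsExpGroup φ g) {l l' : List (LL G)} (p : l.Perm l') (X : LL G)
    (hX : psiL h X = 0) : nestList h l X = nestList h l' X := by
  induction p with
  | nil => rfl
  | cons a _ ih => exact congrArg (fun Y => brr h a Y) ih
  | swap a b l => exact br_comm_ker h b a _ (psi_nestList h l X hX)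
  | trans _ _ ih1 ih2 => rw [ih1, ih2]

lemma dup_perm {α : Type} [DecidableEq α] {x : α} :
    ∀ {l : List α}, List.Duplicate x l → ∃ l', l.Perm (x :: x :: l') := by
  intro l hd
  induction hd with
  | cons_mem hmem => exact ⟨_, List.Perm.cons x (List.perm_cons_erase hmem)⟩
  | @cons_duplicate y l' hdup ih =>
    obtain ⟨l'', hl''⟩ := ih
    refine ⟨y :: l'', ?_⟩
    refine (List.Perm.cons y hl'').trans ?_
    refine (List.Perm.swap x y (x :: l'')).trans ?_
    exact List.Perm.cons x (List.Perm.swap x y l'')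

lemma nest_eq (h : IsExpGroup φ g) : ∀ (k : ℕ) (σ : Fin (k + 2) → LL G),
    nest (brr h) σ = nestList h (List.ofFn (fun p : Fin k => σ ⟨p.1, by omega⟩))
      (brr h (σ ⟨k, by omega⟩) (σ ⟨k + 1, by omega⟩)) := by
  intro k
  induction k with
  | zero =>
    intro σ
    show brr h (σ 0) (Fin.tail σ 0) = brr h (σ ⟨0, by omega⟩) (σ ⟨1, by omega⟩)
    rfl
  | succ k ih =>
    intro σ
    show brr h (σ 0) (nest (brr h) (Fin.tail σ)) = _
    rw [ih (Fin.tail σ)]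
    rw [List.ofFn_succ]
    show brr h (σ 0) (nestList h _ _) = brr h (σ ⟨0, by omega⟩) (nestList h _ _)
    congr 1


lemma he_symm {N : ℕ} (e : Equiv.Perm (Fin N)) (c : ℕ)
    (he : ∀ p : Fin N, c ≤ (p : ℕ) → e p = p) :
    ∀ p : Fin N, c ≤ (p : ℕ) → e.symm p = p := by
  intro p hp
  have h1 := he p hp
  calc e.symm p = e.symm (e p) := by rw [h1]
  _ = p := e.symm_apply_apply p

lemma ebound {N : ℕ} (e : Equiv.Perm (Fin N)) (c : ℕ)
    (he : ∀ p : Fin N, c ≤ (p : ℕ) → e p = p) :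
    ∀ p : Fin N, (p : ℕ) < c → ((e p : Fin N) : ℕ) < c := by
  intro p hp
  by_contra hc
  push_neg at hc
  have h1 := he (e p) hc
  have h2 := e.injective h1
  rw [h2] at hc
  omega

/-- restriction of a permutation fixing the tail to the head segment -/
noncomputable def eRestrict {m : ℕ} (e : Equiv.Perm (Fin (m + 4)))
    (he : ∀ p : Fin (m + 4), m + 2 ≤ (p : ℕ) → e p = p) : Equiv.Perm (Fin (m + 2)) where
  toFun p := ⟨(e ⟨p.1, by omega⟩).1, ebound e (m + 2) he ⟨p.1, by omega⟩ p.2⟩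
  invFun p := ⟨(e.symm ⟨p.1, by omega⟩).1,
    ebound e.symm (m + 2) (he_symm e (m + 2) he) ⟨p.1, by omega⟩ p.2⟩
  left_inv p := by
    refine Fin.ext ?_
    show (e.symm ⟨(e ⟨p.1, _⟩).1, _⟩).1 = p.1
    have e1 : (⟨(e ⟨p.1, by omega⟩).1, by omega⟩ : Fin (m + 4)) = e ⟨p.1, by omega⟩ :=
      Fin.ext rfl
    rw [e1, e.symm_apply_apply]
  right_inv p := by
    refine Fin.ext ?_
    show (e ⟨(e.symm ⟨p.1, _⟩).1, _⟩).1 = p.1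
    have e1 : (⟨(e.symm ⟨p.1, by omega⟩).1, by omega⟩ : Fin (m + 4)) = e.symm ⟨p.1, by omega⟩ :=
      Fin.ext rfl
    rw [e1, e.apply_symm_apply]

lemma perm_invariantP (h : IsExpGroup φ g) (m : ℕ) (σ : Fin (m + 4) → LL G)
    (e : Equiv.Perm (Fin (m + 4))) (he : ∀ p : Fin (m + 4), m + 2 ≤ (p : ℕ) → e p = p) :
    nest (brr h) (σ ∘ e) = nest (brr h) σ := by
  have h1 := nest_eq h (m + 2) (σ ∘ e)
  have h2 := nest_eq h (m + 2) σ
  rw [h1, h2]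
  have et1 : (σ ∘ e) ⟨m + 2, by omega⟩ = σ ⟨m + 2, by omega⟩ := by
    show σ (e ⟨m + 2, by omega⟩) = _
    rw [he ⟨m + 2, by omega⟩ (by exact le_refl _)]
  have et2 : (σ ∘ e) ⟨m + 2 + 1, by omega⟩ = σ ⟨m + 2 + 1, by omega⟩ := by
    show σ (e ⟨m + 2 + 1, by omega⟩) = _
    rw [he ⟨m + 2 + 1, by omega⟩ (by show m + 2 ≤ m + 2 + 1; omega)]
  rw [et1, et2]
  have hlist : (List.ofFn fun p : Fin (m + 2) => (σ ∘ e) ⟨p.1, by omega⟩)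
      = List.ofFn ((fun p : Fin (m + 2) => σ ⟨p.1, by omega⟩) ∘ (eRestrict e he)) := by
    refine congrArg List.ofFn (funext fun p => ?_)
    show σ (e ⟨p.1, by omega⟩) = σ ⟨((eRestrict e he) p).1, by omega⟩
    exact congrArg σ (Fin.ext rfl)
  rw [hlist]
  exact nestList_perm h (Equiv.Perm.ofFn_comp_perm (eRestrict e he) _) _
    (psi_brP h _ _)

lemma repeat_vanishP (h : IsExpGroup φ g) (m : ℕ) (σ : Fin (m + 4) → LL G)
    (hσ : ∀ p, σ p ∈ pieceP G 1)
    (hrep : ∃ s t : Fin (m + 4), s ≠ t ∧ (s : ℕ) < m + 2 ∧ (t : ℕ) < m + 2 ∧ σ s = σ t) :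
    nest (brr h) σ = 0 := by
  classical
  obtain ⟨s, t, hst, hs, ht, hval⟩ := hrep
  rw [nest_eq h (m + 2) σ]
  set f : Fin (m + 2) → LL G := fun p => σ ⟨p.1, by omega⟩ with hf
  set X := brr h (σ ⟨m + 2, by omega⟩) (σ ⟨m + 2 + 1, by omega⟩) with hX
  have hXz : psiL h X = 0 := psi_brP h _ _
  have hnd : ¬ (List.ofFn f).Nodup := by
    rw [List.nodup_ofFn]
    intro hinj
    have e1 : f ⟨s.1, hs⟩ = f ⟨t.1, ht⟩ := by
      show σ ⟨s.1, by omega⟩ = σ ⟨t.1, by omega⟩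
      rw [show (⟨s.1, by omega⟩ : Fin (m + 4)) = s from Fin.ext rfl,
        show (⟨t.1, by omega⟩ : Fin (m + 4)) = t from Fin.ext rfl]
      exact hval
    have := hinj e1
    apply hst
    refine Fin.ext ?_
    exact congrArg Fin.val (by injection this with hh; exact Fin.ext hh)
  obtain ⟨x, hdup⟩ := List.exists_duplicate_iff_not_nodup.mpr hnd
  have hx1 : x ∈ pieceP G 1 := by
    have hm := hdup.mem
    rw [List.mem_ofFn] at hm
    obtain ⟨p, rfl⟩ := hm
    exact hσ _
  obtain ⟨l', hperm⟩ := dup_perm hdup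
  rw [nestList_perm h hperm X hXz]
  exact brackSqP h x hx1 _ (psi_nestList h l' X hXz)


lemma qt_two (h : IsExpGroup φ g) {m : ℕ} (q : QT G m) : q * q = 1 := by
  refine QuotientGroup.induction_on q fun z => ?_
  rw [← QuotientGroup.mk_mul, QuotientGroup.eq_one_iff, Subgroup.mem_subgroupOf]
  show (z : G) * (z : G) ∈ (⊤ : Subgroup G).lowerCentralSeries (m + 1)
  match m with
  | 0 =>
    show (z : G) * (z : G) ∈ (⊤ : Subgroup G).lowerCentralSeries 1
    rw [Subgroup.top_lowerCentralSeries_one, h.comm_eq_ker]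
    exact phi_sq h z
  | m' + 1 =>
    rw [ksq h (lcs_ker h z.2)]
    exact one_mem _

lemma invol_sq (h : IsExpGroup φ g) {s : G} (hs : s * s = 1) (v : G) :
    ⁅s, ⁅s, v⁆⁆ = 1 := by
  have hinv : s⁻¹ = s := inv_eq_of_mul_eq_one_right hs
  have e1 : ⁅s, ⁅s, v⁆⁆ = (s * ⁅s, v⁆ * s⁻¹) * ⁅s, v⁆⁻¹ := by group
  have e2 : s * ⁅s, v⁆ * s⁻¹ = ⁅s, v⁆⁻¹ := by
    have e3 : s * ⁅s, v⁆ * s⁻¹ = (s * s) * v * s⁻¹ * v⁻¹ * s⁻¹ := by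
      rw [commutatorElement_def]; group
    have e4 : (⁅s, v⁆)⁻¹ = v * s * v⁻¹ * s⁻¹ := by
      rw [commutatorElement_def]; group
    rw [e3, hs, one_mul, hinv, e4, hinv]
  rw [e1, e2]
  have h5 := ksq h (phi_comm h s v)
  calc ⁅s, v⁆⁻¹ * ⁅s, v⁆⁻¹ = (⁅s, v⁆ * ⁅s, v⁆)⁻¹ := by group
  _ = 1 := by rw [h5, inv_one]

lemma slot1_ker (h : IsExpGroup φ g) {c w : G} (hc : φ c = 1) (hw : φ w = 1) (s : G) :
    ⁅c * s, w⁆ = ⁅s, w⁆ := by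
  have e1 : ⁅c * s, w⁆ = c * ⁅s, w⁆ * c⁻¹ * ⁅c, w⁆ := by
    rw [commutatorElement_def, commutatorElement_def, commutatorElement_def]; group
  rw [e1, commutatorElement_eq_one_iff_mul_comm.mpr (h.ker_comm c w hc hw), mul_one,
    conj_ker h hc (phi_comm h s w)]

lemma basis_sqP (h : IsExpGroup φ g) (x y : LL G) (hx : x ∈ pieceP G 1)
    (hy : y ∈ pieceP G 1) (hj : ∃ j : ι, psiL h x = stdb j) :
    brr h x (brr h x y) = 0 := by
  obtain ⟨p, rfl⟩ := hx
  obtain ⟨q, rfl⟩ := hy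
  obtain ⟨u, hu, rfl⟩ := pm_ind p
  obtain ⟨v, hv, rfl⟩ := pm_ind q
  obtain ⟨j, hj⟩ := hj
  rw [psiL_lof1 h] at hj
  have hφu : φ u = φ (g j) := by
    rw [h.phi_g j]
    calc φ u = Multiplicative.ofAdd (Multiplicative.toAdd (φ u)) := rfl
    _ = Multiplicative.ofAdd (stdb j) := by rw [hj]
  have hc : φ (u * (g j)⁻¹) = 1 := by
    rw [map_mul, map_inv, hφu]
    group
  have hu_eq : u = (u * (g j)⁻¹) * (g j) := by group
  have hc1 : u * (g j)⁻¹ ∈ (⊤ : Subgroup G).lowerCentralSeries 1 := by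
    rw [Subgroup.top_lowerCentralSeries_one, h.comm_eq_ker]
    exact hc
  have hdmem : ⁅u * (g j)⁻¹, v⁆ ∈ (⊤ : Subgroup G).lowerCentralSeries 2 := lcs_succ_comm v hc1
  have hA : ⁅u, v⁆ = ⁅g j, v⁆ * ⁅u * (g j)⁻¹, v⁆ := by
    conv_lhs => rw [hu_eq]
    have e1 : ⁅(u * (g j)⁻¹) * (g j), v⁆
        = (u * (g j)⁻¹) * ⁅g j, v⁆ * (u * (g j)⁻¹)⁻¹ * ⁅u * (g j)⁻¹, v⁆ := by
      rw [commutatorElement_def, commutatorElement_def, commutatorElement_def]; group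
    rw [e1, conj_ker h hc (phi_comm h (g j) v)]
  have hB : ⁅u, ⁅u, v⁆⁆ = ⁅u, ⁅g j, v⁆⁆ * ⁅u, ⁅u * (g j)⁻¹, v⁆⁆ := by
    conv_lhs => rw [show ⁅u, ⁅u, v⁆⁆ = ⁅u, ⁅u, v⁆⁆ from rfl]
    rw [show (⁅u, v⁆ : G) = ⁅g j, v⁆ * ⁅u * (g j)⁻¹, v⁆ from hA]
    have e2 : ⁅u, ⁅g j, v⁆ * ⁅u * (g j)⁻¹, v⁆⁆
        = ⁅u, ⁅g j, v⁆⁆ * (⁅g j, v⁆ * ⁅u, ⁅u * (g j)⁻¹, v⁆⁆ * ⁅g j, v⁆⁻¹) := by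
      group
    rw [e2, conj_ker h (phi_comm h (g j) v) (phi_comm h u ⁅u * (g j)⁻¹, v⁆)]
  have hC : ⁅u, ⁅g j, v⁆⁆ = 1 := by
    conv_lhs => rw [hu_eq]
    rw [slot1_ker h hc (phi_comm h (g j) v) (g j)]
    refine invol_sq h ?_ v
    have := h.g_sq j
    rwa [pow_two] at this
  have M3 : ⁅u, ⁅u, v⁆⁆ ∈ (⊤ : Subgroup G).lowerCentralSeries 3 := by
    rw [hB, hC, one_mul]
    have := comm_mem h (a := 0) (b := 2) (mem_lcs_zero u) hdmem
    have e : (0 : ℕ) + 2 + 1 = 3 := rfl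
    rwa [e] at this
  rw [show lofP G 1 (mkk 0 u hu) = lofP G (0 + 1) (mkk 0 u hu) from rfl,
    show lofP G 1 (mkk 0 v hv) = lofP G (0 + 1) (mkk 0 v hv) from rfl,
    brr_mkk h hu hv, brr_mkk h hu (comm_mem h hu hv)]
  show lofP G 3 (mkk 2 ⁅u, ⁅u, v⁆⁆
    (comm_mem h (a := 0) (b := 1) hu (comm_mem h (a := 0) (b := 0) hu hv))) = 0
  rw [mkk_eq_zero _ M3, map_zero]

/-- the isomorphism from the lcs graded piece onto the corresponding piece of `LL G` -/
noncomputable def thetaE (h : IsExpGroup φ g) (m : ℕ) : QT G m ≃ ↥(pieceP G (m + 1)) :=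
  Equiv.ofBijective
    (fun q => ⟨lofP G (m + 1) (QuotientAddGroup.mk (Additive.ofMul q)),
      ⟨QuotientAddGroup.mk (Additive.ofMul q), rfl⟩⟩)
    (by
      constructor
      · intro q q' he
        have h1 : lofP G (m + 1) (QuotientAddGroup.mk (Additive.ofMul q))
            = lofP G (m + 1) (QuotientAddGroup.mk (Additive.ofMul q')) :=
          congrArg Subtype.val he
        have h2 : (QuotientAddGroup.mk (Additive.ofMul q) : PmQ G m)
            = QuotientAddGroup.mk (Additive.ofMul q') := by
          have h3 := congrArg (DirectSum.component F2 ℕ (PP G) (m + 1)) h1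
          rwa [lofP, DirectSum.component.lof_self, DirectSum.component.lof_self] at h3
        rw [QuotientAddGroup.eq] at h2
        obtain ⟨y, hy⟩ := h2
        have hy0 : y + y = 0 := by
          show Additive.ofMul (Additive.toMul y * Additive.toMul y) = 0
          rw [qt_two h (Additive.toMul y)]
          rfl
        have h4 : -(Additive.ofMul q) + Additive.ofMul q' = 0 := by rw [← hy]; exact hy0
        have h6 : Additive.ofMul q + (-(Additive.ofMul q) + Additive.ofMul q')
            = Additive.ofMul q + 0 := by rw [h4]
        have h7 : Additive.ofMul q' = Additive.ofMul q := by simpa using h6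
        exact (Additive.ofMul.injective h7).symm
      · rintro ⟨v, ⟨p, rfl⟩⟩
        obtain ⟨x, hx, rfl⟩ := pm_ind p
        exact ⟨QuotientGroup.mk ⟨x, hx⟩, rfl⟩)

lemma thetaE_apply (h : IsExpGroup φ g) (m : ℕ) (q : QT G m) :
    ((thetaE h m q : ↥(pieceP G (m + 1))) : LL G)
      = lofP G (m + 1) (QuotientAddGroup.mk (Additive.ofMul q)) := rfl

/-- the bundled expansion Lie algebra of an expansion group -/
noncomputable def EE (h : IsExpGroup φ g) : ExpLieAlg ι where
  L := LL G
  br := brr h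
  piece := pieceP G
  psi := psiL h
  isexp :=
    { piece_zero := piece_zeroP
      indep := indepP
      span_top := span_topP
      graded := gradedP h
      br_self := br_diag h
      jacobi := jacobiP h
      psi_surj := psi_surjP h
      psi_br := psi_brP h
      psi_graded := psi_gradedP h
      ker_abelian := ker_abelianP h
      comm_eq_ker := comm_eq_kerP h
      perm_invariant := fun m σ _ e he => perm_invariantP h m σ e he
      repeat_vanish := fun m σ hσ hrep => repeat_vanishP h m σ hσ hrep
      basis_bracket_sq := fun x y hx hy hj => basis_sqP h x y hx hy hj }

end HDep

end AssocGradedConstruction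

/-- For an `n`-expansion group `(G, φ, (g_1,…,g_n))`, the associated graded object of the
lower central series of `G` is an `F2`-vector space and, together with the bracket induced by
commutators and the map induced by `φ`, it is an `n`-expansion Lie algebra.  This is expressed
by the existence of an `n`-expansion Lie algebra `E` together with bijections
`θ m : G^(m+1)/G^(m+2) ≃ L_{m+1}(E)` which are multiplicative-to-additive group isomorphisms,
carry the commutator pairing to the bracket of `E`, and intertwine `φ` with `ψ`. -/
theorem statement4 (n : ℕ) (G : Type) [Group G] (φ : G →* Multiplicative (V (Fin n)))
    (g : Fin n → G) (h : IsExpGroup φ g) :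
    ∃ (E : ExpLieAlg (Fin n)) (θ : ∀ m : ℕ, lcsQ G m ≃ ↥(E.piece (m + 1))),
      (∀ (m : ℕ) (a b : ↥((⊤ : Subgroup G).lowerCentralSeries m)),
        ((θ m (QuotientGroup.mk (a * b)) : E.L)) =
          (θ m (QuotientGroup.mk a) : E.L) + (θ m (QuotientGroup.mk b) : E.L)) ∧
      (∀ (m k : ℕ) (a : ↥((⊤ : Subgroup G).lowerCentralSeries m)) (b : ↥((⊤ : Subgroup G).lowerCentralSeries k))
          (c : G) (hc : c ∈ (⊤ : Subgroup G).lowerCentralSeries (m + k + 1)),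
        c = ⁅(a : G), (b : G)⁆ →
          E.br (θ m (QuotientGroup.mk a) : E.L) (θ k (QuotientGroup.mk b) : E.L) =
            (θ (m + k + 1) (QuotientGroup.mk ⟨c, hc⟩) : E.L)) ∧
      (∀ a : ↥((⊤ : Subgroup G).lowerCentralSeries 0),
        E.psi (θ 0 (QuotientGroup.mk a) : E.L) = Multiplicative.toAdd (φ (a : G))) := by
  refine ⟨EE h, fun m => thetaE h m, ?_, ?_, ?_⟩
  · intro m a b
    show lofP G (m + 1) (mkk m ((a : G) * (b : G)) (mul_mem a.2 b.2))
      = lofP G (m + 1) (mkk m (a : G) a.2) + lofP G (m + 1) (mkk m (b : G) b.2)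
    rw [mkk_mul a.2 b.2, map_add]
  · intro m k a b c hc hcc
    show brr h (lofP G (m + 1) (mkk m (a : G) a.2)) (lofP G (k + 1) (mkk k (b : G) b.2))
      = lofP G (m + k + 1 + 1) (mkk (m + k + 1) c hc)
    rw [brr_mkk h a.2 b.2]
    exact congrArg (lofP G (m + k + 2)) (mkk_congr hcc.symm _ _)
  · intro a
    show psiL h (lofP G 1 (mkk 0 (a : G) a.2)) = Multiplicative.toAdd (φ (a : G))
    exact psiL_lof1 h a.2

end HigherGenus
end
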